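/- arXiv:solv-int/9903014 — 9 statements merged into one kernel-verified Lean document; each statement's English description precedes it below -/
import Mathlib

section
/- Let w be a smooth function and ψ_0 a nowhere-vanishing smooth function on an open interval I ⊆ ℝ, and define the sequence ψ_n by the recursion. Then for every N ≥ 1, the derivative of τ_N satisfies d/dz τ_N = τ_N[0,1,…,N−2,N], i.e. the derivative of the Hankel determinant equals the determinant with last-column offset shifted from N−1 to N. -/
/-- Derivative of a determinant of a matrix-valued function: the sum over columns of the
determinant with that column replaced by its entrywise derivative. -/
lemma hasDerivAt_det_aux {N : ℕ} {M : ℝ → Matrix (Fin N) (Fin N) ℝ}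
    {M' : Matrix (Fin N) (Fin N) ℝ} {z : ℝ}
    (h : ∀ i j, HasDerivAt (fun t => M t i j) (M' i j) z) :
    HasDerivAt (fun t => (M t).det)
      (∑ j, ((M z).updateCol j (fun i => M' i j)).det) z := by
  have key : ∀ σ : Equiv.Perm (Fin N),
      HasDerivAt (fun t => ∏ i, M t (σ i) i)
        (∑ i, (∏ j ∈ Finset.univ.erase i, M z (σ j) j) * M' (σ i) i) z := by
    intro σ
    simpa [smul_eq_mul] using HasDerivAt.fun_finsetProd (u := Finset.univ)
      (f := fun i t => M t (σ i) i) (f' := fun i => M' (σ i) i) (x := z)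
      (fun i _ => h (σ i) i)
  have h1 : HasDerivAt (fun t => (M t).det)
      (∑ σ : Equiv.Perm (Fin N), (((Equiv.Perm.sign σ : ℤ) : ℝ)) *
        ∑ i, (∏ j ∈ Finset.univ.erase i, M z (σ j) j) * M' (σ i) i) z := by
    have : (fun t => (M t).det) = fun t =>
        ∑ σ : Equiv.Perm (Fin N), (((Equiv.Perm.sign σ : ℤ) : ℝ)) * ∏ i, M t (σ i) i := by
      funext t; exact Matrix.det_apply' (M t)
    rw [this]
    exact HasDerivAt.fun_sum (fun σ _ => (key σ).const_mul _)
  convert h1 using 1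
  simp_rw [Finset.mul_sum]
  rw [Finset.sum_comm]
  refine Finset.sum_congr rfl fun i _ => ?_
  rw [Matrix.det_apply']
  refine Finset.sum_congr rfl fun σ _ => ?_
  congr 1
  rw [← Finset.mul_prod_erase Finset.univ
      (fun j => ((M z).updateCol i fun r => M' r i) (σ j) j) (Finset.mem_univ i),
    Matrix.updateCol_self, mul_comm]
  congr 1
  exact Finset.prod_congr rfl fun j hj =>
    Matrix.updateCol_ne (Finset.ne_of_mem_erase hj)

/-- `∑_j det(A with column j replaced by column j of L*A) = tr(L) * det A`. -/
lemma sum_det_updateColumn_mul {N : ℕ} (A L : Matrix (Fin N) (Fin N) ℝ) :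
    ∑ j, (A.updateCol j (fun i => (L * A) i j)).det = L.trace * A.det := by
  have h1 : ∀ j : Fin N, (A.updateCol j (fun i => (L * A) i j)).det
      = (A.adjugate * (L * A)) j j := by
    intro j
    rw [← Matrix.cramer_apply, Matrix.cramer_eq_adjugate_mulVec]
    simp [Matrix.mulVec, Matrix.mul_apply, dotProduct]
  simp_rw [h1]
  have h2 : ∑ j, (A.adjugate * (L * A)) j j = (A.adjugate * (L * A)).trace := rfl
  rw [h2, ← Matrix.mul_assoc, Matrix.trace_mul_comm, ← Matrix.mul_assoc,
    Matrix.mul_adjugate, Matrix.smul_mul, Matrix.one_mul, Matrix.trace_smul]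
  simp [mul_comm]

/-- All the `ψ n` are smooth on `I`. -/
lemma psi_smooth_aux
    (I : Set ℝ) (hIopen : IsOpen I)
    (w ψ0 : ℝ → ℝ)
    (hw_smooth : ContDiffOn ℝ (⊤ : ℕ∞) w I)
    (hψ0_smooth : ContDiffOn ℝ (⊤ : ℕ∞) ψ0 I)
    (hψ0_ne : ∀ z ∈ I, ψ0 z ≠ 0)
    (ψ : ℕ → ℝ → ℝ)
    (hψ_zero : ψ 0 = ψ0)
    (hψ_rec : ∀ n : ℕ, ∀ z ∈ I, ψ (n + 1) z =
      deriv (ψ n) z + (w z / (2 * ψ0 z)) *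
        ∑ k ∈ Finset.range n, ψ k z * ψ (n - 1 - k) z) :
    ∀ n, ContDiffOn ℝ (⊤ : ℕ∞) (ψ n) I := by
  have hg : ContDiffOn ℝ (⊤ : ℕ∞) (fun z => w z / (2 * ψ0 z)) I := by
    apply hw_smooth.div (contDiffOn_const.mul hψ0_smooth)
    intro z hz
    simpa using hψ0_ne z hz
  intro n
  induction n using Nat.strong_induction_on with
  | _ n ih =>
    match n with
    | 0 => rw [hψ_zero]; exact hψ0_smooth
    | (m+1) =>
      have hder : ContDiffOn ℝ (⊤ : ℕ∞) (deriv (ψ m)) I :=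
        (ih m (Nat.lt_succ_self m)).deriv_of_isOpen hIopen (by simp)
      have hsum : ContDiffOn ℝ (⊤ : ℕ∞)
          (fun z => ∑ k ∈ Finset.range m, ψ k z * ψ (m - 1 - k) z) I := by
        apply ContDiffOn.sum
        intro k hk
        have hk' : k < m + 1 := lt_of_lt_of_le (Finset.mem_range.mp hk) (Nat.le_succ m)
        have hk'' : m - 1 - k < m + 1 := by omega
        exact (ih k hk').mul (ih _ hk'')
      refine ContDiffOn.congr (hder.add (hg.mul hsum)) ?_
      intro z hz
      exact hψ_rec m z hz

/-- The `N×N` determinant with `(i,j)` entry `ψ_{i-1+c_j}` (rows/columns indexed from 0),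
i.e. the Hankel determinant of the sequence `ψ` with column offsets `c`.
`tauShift ψ N (fun j => j)` is the Hankel determinant `τ_N` itself. -/
noncomputable def tauShift (ψ : ℕ → ℝ → ℝ) (N : ℕ) (c : Fin N → ℕ) (z : ℝ) : ℝ :=
  Matrix.det (Matrix.of fun i j : Fin N => ψ ((i : ℕ) + c j) z)

/-- Differential formula (A.1): `d/dz τ_N = τ_N[0,1,…,N-2,N]`. -/
theorem tau_shift_deriv
    (I : Set ℝ) (hIopen : IsOpen I) (hIconn : I.OrdConnected)
    (w ψ0 : ℝ → ℝ)
    (hw_smooth : ContDiffOn ℝ (⊤ : ℕ∞) w I)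
    (hψ0_smooth : ContDiffOn ℝ (⊤ : ℕ∞) ψ0 I)
    (hψ0_ne : ∀ z ∈ I, ψ0 z ≠ 0)
    (ψ : ℕ → ℝ → ℝ)
    (hψ_zero : ψ 0 = ψ0)
    (hψ_rec : ∀ n : ℕ, ∀ z ∈ I, ψ (n + 1) z =
      deriv (ψ n) z + (w z / (2 * ψ0 z)) *
        ∑ k ∈ Finset.range n, ψ k z * ψ (n - 1 - k) z)
    (N : ℕ) (hN : 1 ≤ N) :
    ∀ z ∈ I,
      deriv (fun t => tauShift ψ N (fun j => (j : ℕ)) t) z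
        = tauShift ψ N (fun j => if (j : ℕ) = N - 1 then N else (j : ℕ)) z := by
  have hsmooth : ∀ n, ContDiffOn ℝ (⊤ : ℕ∞) (ψ n) I :=
    psi_smooth_aux I hIopen w ψ0 hw_smooth hψ0_smooth hψ0_ne ψ hψ_zero hψ_rec
  intro z hz
  have hdiff : ∀ n, DifferentiableAt ℝ (ψ n) z := fun n =>
    ((hsmooth n).differentiableOn (by simp)).differentiableAt (hIopen.mem_nhds hz)
  set g : ℝ → ℝ := fun t => w t / (2 * ψ0 t) with hg_def
  have hder : ∀ n, HasDerivAt (ψ n)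
      (ψ (n+1) z - g z * ∑ k ∈ Finset.range n, ψ k z * ψ (n-1-k) z) z := by
    intro n
    have h := (hdiff n).hasDerivAt
    have he : deriv (ψ n) z
        = ψ (n+1) z - g z * ∑ k ∈ Finset.range n, ψ k z * ψ (n-1-k) z := by
      rw [hψ_rec n z hz]; ring
    rwa [he] at h
  set A : Matrix (Fin N) (Fin N) ℝ :=
    Matrix.of (fun i j : Fin N => ψ ((i : ℕ) + (j : ℕ)) z) with hA
  set D : Matrix (Fin N) (Fin N) ℝ :=
    Matrix.of (fun i j : Fin N =>
      ψ ((i : ℕ) + (j : ℕ) + 1) z -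
        g z * ∑ k ∈ Finset.range ((i : ℕ) + (j : ℕ)),
          ψ k z * ψ ((i : ℕ) + (j : ℕ) - 1 - k) z) with hD
  have hdet : HasDerivAt (fun t => tauShift ψ N (fun j => (j : ℕ)) t)
      (∑ j, (A.updateCol j (fun i => D i j)).det) z := by
    exact hasDerivAt_det_aux
      (M := fun t => Matrix.of fun i j : Fin N => ψ ((i : ℕ) + (j : ℕ)) t)
      (M' := D) (fun i j => hder ((i : ℕ) + (j : ℕ)))
  -- the strictly lower triangular matrix L
  set L : Matrix (Fin N) (Fin N) ℝ :=
    Matrix.of (fun i m : Fin N =>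
      if (m : ℕ) < (i : ℕ) then ψ ((i : ℕ) - 1 - (m : ℕ)) z else 0) with hL
  have hLA : ∀ (i j : Fin N), (L * A) i j
      = ∑ m ∈ Finset.range (i : ℕ), ψ ((i : ℕ) - 1 - m) z * ψ (m + (j : ℕ)) z := by
    intro i j
    rw [Matrix.mul_apply]
    have : ∀ m : Fin N, L i m * A m j
        = if (m : ℕ) < (i : ℕ) then ψ ((i : ℕ) - 1 - (m : ℕ)) z * ψ ((m : ℕ) + (j : ℕ)) z
          else 0 := by
      intro m
      simp only [hL, hA, Matrix.of_apply]
      by_cases hm : (m : ℕ) < (i : ℕ)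
      · rw [if_pos hm, if_pos hm]
      · rw [if_neg hm, if_neg hm, zero_mul]
    simp_rw [this]
    rw [Fin.sum_univ_eq_sum_range
      (fun m => if m < (i : ℕ) then ψ ((i : ℕ) - 1 - m) z * ψ (m + (j : ℕ)) z else 0) N]
    rw [← Finset.sum_subset (Finset.range_subset_range.mpr (le_of_lt i.isLt))
      (fun x _ hx => by simp [Finset.mem_range.not.mp hx] )]
    exact Finset.sum_congr rfl fun m hm => if_pos (Finset.mem_range.mp hm)
  -- split the derivative column
  have hsplit : ∀ j : Fin N, (fun i : Fin N => D i j)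
      = (fun i : Fin N => ψ ((i : ℕ) + (j : ℕ) + 1) z)
        - g z • ((fun i : Fin N => ∑ k ∈ Finset.range (j : ℕ),
            ψ k z * ψ ((i : ℕ) + ((j : ℕ) - 1 - k)) z)
          + fun i : Fin N => (L * A) i j) := by
    intro j
    funext i
    have hsum : ∑ k ∈ Finset.range ((i : ℕ) + (j : ℕ)),
        ψ k z * ψ ((i : ℕ) + (j : ℕ) - 1 - k) z
        = (∑ k ∈ Finset.range (j : ℕ), ψ k z * ψ ((i : ℕ) + ((j : ℕ) - 1 - k)) z)
          + (L * A) i j := by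
      rw [hLA i j]
      have hrw : (i : ℕ) + (j : ℕ) = (j : ℕ) + (i : ℕ) := Nat.add_comm _ _
      rw [hrw, Finset.sum_range_add]
      congr 1
      · refine Finset.sum_congr rfl fun k hk => ?_
        have hk' : k < (j : ℕ) := Finset.mem_range.mp hk
        congr 2
        omega
      · refine Finset.sum_congr rfl fun m hm => ?_
        rw [mul_comm]
        congr 2
        · omega
        · omega
    simp only [hD, Matrix.of_apply, Pi.sub_apply, Pi.smul_apply, Pi.add_apply, smul_eq_mul]
    rw [hsum]
  -- the value of term of the derivative sum
  set jN : Fin N := ⟨N - 1, by omega⟩ with hjN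
  have hterm : ∀ j : Fin N, (A.updateCol j (fun i => D i j)).det
      = (A.updateCol j (fun i : Fin N => ψ ((i : ℕ) + (j : ℕ) + 1) z)).det
        - g z * (A.updateCol j (fun i => (L * A) i j)).det := by
    intro j
    rw [hsplit j]
    rw [← Matrix.cramer_apply, map_sub, map_smul, map_add]
    have hS1 : Matrix.cramer A (fun i : Fin N => ∑ k ∈ Finset.range (j : ℕ),
        ψ k z * ψ ((i : ℕ) + ((j : ℕ) - 1 - k)) z) j = 0 := by
      have hfun : (fun i : Fin N => ∑ k ∈ Finset.range (j : ℕ),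
          ψ k z * ψ ((i : ℕ) + ((j : ℕ) - 1 - k)) z)
          = ∑ k ∈ Finset.range (j : ℕ), ψ k z •
            (fun i : Fin N => A i ⟨(j : ℕ) - 1 - k, by omega⟩) := by
        funext i
        rw [Finset.sum_apply]
        exact Finset.sum_congr rfl fun k hk => rfl
      rw [hfun, map_sum, Finset.sum_apply]
      refine Finset.sum_eq_zero fun k hk => ?_
      have hk' : k < (j : ℕ) := Finset.mem_range.mp hk
      have hne : (⟨(j : ℕ) - 1 - k, by omega⟩ : Fin N) ≠ j :=
        Fin.ne_of_val_ne (by simp only [Fin.val_mk]; omega)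
      rw [map_smul, Pi.smul_apply, Matrix.cramer_apply, smul_eq_mul,
        Matrix.det_updateCol_eq_zero hne, mul_zero]
    simp only [Pi.sub_apply, Pi.smul_apply, Pi.add_apply, smul_eq_mul]
    rw [hS1, Matrix.cramer_apply, Matrix.cramer_apply]
    ring
  -- sum of the L-part vanishes
  have hLtr : L.trace = 0 := by
    rw [Matrix.trace]
    refine Finset.sum_eq_zero fun i _ => ?_
    simp [Matrix.diag, hL]
  have hsumL : ∑ j, (A.updateCol j (fun i => (L * A) i j)).det = 0 := by
    rw [sum_det_updateColumn_mul A L, hLtr, zero_mul]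
  -- sum of the first part picks the last column
  have hfirst : ∑ j, (A.updateCol j
        (fun i : Fin N => ψ ((i : ℕ) + (j : ℕ) + 1) z)).det
      = tauShift ψ N (fun j => if (j : ℕ) = N - 1 then N else (j : ℕ)) z := by
    rw [Finset.sum_eq_single jN]
    · have hupd : A.updateCol jN (fun i : Fin N => ψ ((i : ℕ) + (jN : ℕ) + 1) z)
          = Matrix.of fun i j : Fin N =>
              ψ ((i : ℕ) + (if (j : ℕ) = N - 1 then N else (j : ℕ))) z := by
        ext i j
        by_cases hj : j = jN
        · subst hj
          rw [Matrix.updateCol_self, Matrix.of_apply]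
          have hv : (jN : ℕ) = N - 1 := rfl
          rw [hv, if_pos rfl]
          congr 1
          omega
        · rw [Matrix.updateCol_ne hj]
          have hj' : (j : ℕ) ≠ N - 1 := fun h => hj (Fin.ext (by rw [h]))
          simp [hA, Matrix.of_apply, hj']
      rw [hupd]
      rfl
    · intro j _ hj
      have hj' : (j : ℕ) ≠ N - 1 := fun h => hj (Fin.ext (by rw [h]))
      have hjlt : (j : ℕ) + 1 < N := by have := j.isLt; omega
      have hcol : (fun i : Fin N => ψ ((i : ℕ) + (j : ℕ) + 1) z)
          = fun i : Fin N => A i ⟨(j : ℕ) + 1, hjlt⟩ := by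
        funext i
        show ψ ((i : ℕ) + (j : ℕ) + 1) z = ψ ((i : ℕ) + ((j : ℕ) + 1)) z
        rfl
      rw [hcol]
      exact Matrix.det_updateCol_eq_zero
        (Fin.ne_of_val_ne (by simp only [Fin.val_mk]; omega))
    · intro h
      exact absurd (Finset.mem_univ jN) h
  -- put everything together
  rw [hdet.deriv]
  calc ∑ j, (A.updateCol j (fun i => D i j)).det
      = ∑ j, ((A.updateCol j (fun i : Fin N => ψ ((i : ℕ) + (j : ℕ) + 1) z)).det
          - g z * (A.updateCol j (fun i => (L * A) i j)).det) :=
        Finset.sum_congr rfl fun j _ => hterm j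
    _ = (∑ j, (A.updateCol j
          (fun i : Fin N => ψ ((i : ℕ) + (j : ℕ) + 1) z)).det)
        - g z * ∑ j, (A.updateCol j (fun i => (L * A) i j)).det := by
        rw [Finset.sum_sub_distrib, Finset.mul_sum]
    _ = tauShift ψ N (fun j => if (j : ℕ) = N - 1 then N else (j : ℕ)) z := by
        rw [hsumL, hfirst, mul_zero, sub_zero]
end

section
/- Let w be a smooth function and ψ_0 a nowhere-vanishing smooth function on an open interval I ⊆ ℝ, and define the sequence ψ_n by the recursion. Then for every N ≥ 2, the identity τ_N[0,…,N−2,N+1] + τ_N[0,…,N−3,N−1,N] = τ_N'' + (w/2)·τ_N holds on I. -/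
open Finset Matrix


noncomputable def psie (ψ : ℕ → ℝ → ℝ) (m : ℤ) (z : ℝ) : ℝ :=
  if 0 ≤ m then ψ m.toNat z else 0

lemma det_hasDerivAt {n : Type*} [Fintype n] [DecidableEq n]
    (f : n → n → ℝ → ℝ) (f' : n → n → ℝ) (x : ℝ)
    (hf : ∀ i j, HasDerivAt (fun t => f i j t) (f' i j) x) :
    HasDerivAt (fun t => (Matrix.of fun i j => f i j t).det)
      (∑ j, ((Matrix.of fun i j => f i j x).updateCol j (fun i => f' i j)).det) x := by
  have h1 : (fun t => (Matrix.of fun i j => f i j t).det)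
      = fun t => ∑ σ : Equiv.Perm n, ((Equiv.Perm.sign σ : ℤ) : ℝ) * ∏ i, f (σ i) i t := by
    funext t
    rw [Matrix.det_apply]
    refine Finset.sum_congr rfl fun σ _ => ?_
    simp [Units.smul_def, zsmul_eq_mul]
  rw [h1]
  have h2 : ∀ σ : Equiv.Perm n,
      HasDerivAt (fun t => ((Equiv.Perm.sign σ : ℤ) : ℝ) * ∏ i, f (σ i) i t)
        (((Equiv.Perm.sign σ : ℤ) : ℝ) *
          ∑ i, (∏ j ∈ Finset.univ.erase i, f (σ j) j x) * f' (σ i) i) x := by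
    intro σ
    have := (HasDerivAt.finset_prod (u := Finset.univ)
      (f := fun i t => f (σ i) i t) (f' := fun i => f' (σ i) i) (fun i _ => hf (σ i) i)).const_mul
      ((Equiv.Perm.sign σ : ℤ) : ℝ)
    simpa [smul_eq_mul] using this
  have h3 := HasDerivAt.fun_sum (u := Finset.univ) (fun σ _ => h2 σ)
  convert h3 using 1
  · rfl
  · rfl
  simp_rw [Finset.mul_sum]
  rw [Finset.sum_comm]
  refine Finset.sum_congr rfl fun j _ => ?_
  rw [Matrix.det_apply]
  refine Finset.sum_congr rfl fun σ _ => ?_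
  rw [Units.smul_def, zsmul_eq_mul]
  rw [← Finset.mul_prod_erase Finset.univ _ (Finset.mem_univ j)]
  have e1 : ((Matrix.of fun i j' => f i j' x).updateCol j fun i => f' i j) (σ j) j
      = f' (σ j) j := by simp [Matrix.updateCol_apply]
  have e2 : ∀ i ∈ Finset.univ.erase j,
      ((Matrix.of fun i j' => f i j' x).updateCol j fun i => f' i j) (σ i) i
        = f (σ i) i x := by
    intro i hi
    simp [Matrix.updateCol_apply, Finset.ne_of_mem_erase hi]
  rw [e1, Finset.prod_congr rfl e2]
  ring

lemma sum_range_add' {M : Type*} [AddCommMonoid M] (f : ℕ → M) (m n : ℕ) :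
    ∑ k ∈ Finset.range (m + n), f k
      = (∑ k ∈ Finset.range m, f k) + ∑ k ∈ Finset.range n, f (m + k) := by
  induction n with
  | zero => simp
  | succ n ih => rw [← Nat.add_assoc, Finset.sum_range_succ, ih, Finset.sum_range_succ,
      add_assoc]

section master

variable (I : Set ℝ) (w ψ0 : ℝ → ℝ) (ψ : ℕ → ℝ → ℝ)

lemma tau_hasDerivAt
    (hder : ∀ m : ℕ, ∀ z ∈ I, HasDerivAt (ψ m) (deriv (ψ m) z) z)
    (hψ_rec : ∀ n : ℕ, ∀ z ∈ I, ψ (n + 1) z =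
      deriv (ψ n) z + (w z / (2 * ψ0 z)) *
        ∑ k ∈ Finset.range n, ψ k z * ψ (n - 1 - k) z)
    (N : ℕ) (c : Fin N → ℕ) (z : ℝ) (hz : z ∈ I) :
    HasDerivAt (tauShift ψ N c)
      ((∑ j, ((Matrix.of fun i j' : Fin N => ψ ((i : ℕ) + c j') z).updateCol j
          fun i => ψ ((i : ℕ) + c j + 1) z).det)
        - (w z / (2 * ψ0 z)) * ∑ j, ∑ k ∈ Finset.range (c j),
            ψ k z * ((Matrix.of fun i j' : Fin N => ψ ((i : ℕ) + c j') z).updateCol j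
              fun i => ψ ((i : ℕ) + (c j - 1 - k)) z).det) z := by
  classical
  set M : Matrix (Fin N) (Fin N) ℝ := Matrix.of fun i j' : Fin N => ψ ((i : ℕ) + c j') z with hM
  have h0 := det_hasDerivAt (n := Fin N) (f := fun i j t => ψ ((i : ℕ) + c j) t)
    (f' := fun i j => deriv (ψ ((i : ℕ) + c j)) z) z (fun i j => hder _ z hz)
  have hfun : (fun t => (Matrix.of fun i j : Fin N => ψ ((i : ℕ) + c j) t).det)
      = tauShift ψ N c := rfl
  rw [hfun] at h0
  convert h0 using 1
  set u : ℝ := w z / (2 * ψ0 z) with hu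
  have hcol : ∀ j : Fin N, (fun i : Fin N => deriv (ψ ((i : ℕ) + c j)) z)
      = (fun i : Fin N => ψ ((i : ℕ) + c j + 1) z)
        - u • (fun i : Fin N => ∑ k ∈ Finset.range ((i : ℕ) + c j),
            ψ k z * ψ ((i : ℕ) + c j - 1 - k) z) := by
    intro j; funext i
    have h := hψ_rec ((i : ℕ) + c j) z hz
    simp only [Pi.sub_apply, Pi.smul_apply, smul_eq_mul]
    linarith
  have hscol : ∀ j : Fin N, (fun i : Fin N => ∑ k ∈ Finset.range ((i : ℕ) + c j),
        ψ k z * ψ ((i : ℕ) + c j - 1 - k) z)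
      = ∑ k ∈ Finset.range (c j + N), ψ k z •
          (fun i : Fin N => psie ψ ((i : ℕ) + (c j : ℤ) - 1 - (k : ℤ)) z) := by
    intro j; funext i
    rw [Finset.sum_apply]
    simp only [Pi.smul_apply, smul_eq_mul]
    have hsub : Finset.range ((i : ℕ) + c j) ⊆ Finset.range (c j + N) :=
      Finset.range_subset_range.mpr (by omega)
    rw [← Finset.sum_subset hsub (fun k hk1 hk2 => ?_)]
    · refine Finset.sum_congr rfl fun k hk => ?_
      have hk := Finset.mem_range.mp hk
      have hpos : (0:ℤ) ≤ ((i : ℕ) : ℤ) + (c j : ℤ) - 1 - (k : ℤ) := by omega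
      rw [psie, if_pos hpos]
      congr 2
      omega
    · have hk1 := Finset.mem_range.mp hk1
      have hk2 : ¬ (k < (i : ℕ) + c j) := fun h => hk2 (Finset.mem_range.mpr h)
      rw [psie, if_neg (by omega)]
      ring
  -- express column determinants via cramer
  simp only [← Matrix.cramer_apply]
  -- compute each cramer of the derivative column
  have hmain : ∀ j : Fin N,
      Matrix.cramer M (fun i : Fin N => deriv (ψ ((i : ℕ) + c j)) z) j
        = Matrix.cramer M (fun i : Fin N => ψ ((i : ℕ) + c j + 1) z) j
          - u * ((∑ k ∈ Finset.range (c j), ψ k z *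
              Matrix.cramer M (fun i : Fin N => ψ ((i : ℕ) + (c j - 1 - k)) z) j)
            + ∑ k ∈ Finset.range N, ψ (c j + k) z *
              Matrix.cramer M (fun i : Fin N => psie ψ ((i : ℕ) - 1 - (k : ℤ)) z) j) := by
    intro j
    rw [hcol j, map_sub, _root_.map_smul, hscol j, map_sum]
    simp only [Pi.sub_apply, Pi.smul_apply, smul_eq_mul, Finset.sum_apply, _root_.map_smul]
    congr 1
    congr 1
    rw [sum_range_add' (fun k => ψ k z * Matrix.cramer M
        (fun i : Fin N => psie ψ ((i : ℕ) + (c j : ℤ) - 1 - (k : ℤ)) z) j) (c j) N]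
    congr 1
    · refine Finset.sum_congr rfl fun k hk => ?_
      have hk := Finset.mem_range.mp hk
      have hcoleq : (fun i : Fin N => psie ψ (((i : ℕ) : ℤ) + (c j : ℤ) - 1 - (k : ℤ)) z)
          = fun i : Fin N => ψ ((i : ℕ) + (c j - 1 - k)) z := by
        funext i
        rw [psie, if_pos (by omega)]
        congr 2
        omega
      rw [hcoleq]
    · refine Finset.sum_congr rfl fun k hk => ?_
      have hcoleq : (fun i : Fin N => psie ψ (((i : ℕ) : ℤ) + (c j : ℤ) - 1 - ((c j + k : ℕ) : ℤ)) z)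
          = fun i : Fin N => psie ψ (((i : ℕ) : ℤ) - 1 - (k : ℤ)) z := by
        funext i
        congr 1
        push_cast
        ring
      rw [hcoleq]
  have hC : ∑ j : Fin N, ∑ k ∈ Finset.range N, ψ (c j + k) z *
      Matrix.cramer M (fun i : Fin N => psie ψ (((i : ℕ) : ℤ) - 1 - (k : ℤ)) z) j = 0 := by
    rw [Finset.sum_comm]
    refine Finset.sum_eq_zero fun k hk => ?_
    have hkN := Finset.mem_range.mp hk
    have hrow : ∀ j : Fin N, ψ (c j + k) z = M ⟨k, hkN⟩ j := by
      intro j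
      show ψ (c j + k) z = ψ (((⟨k, hkN⟩ : Fin N) : ℕ) + c j) z
      congr 1
      simp [Nat.add_comm]
    calc ∑ j : Fin N, ψ (c j + k) z *
          Matrix.cramer M (fun i : Fin N => psie ψ (((i : ℕ) : ℤ) - 1 - (k : ℤ)) z) j
        = ∑ j : Fin N, M ⟨k, hkN⟩ j *
          Matrix.cramer M (fun i : Fin N => psie ψ (((i : ℕ) : ℤ) - 1 - (k : ℤ)) z) j :=
          Finset.sum_congr rfl fun j _ => by rw [hrow j]
      _ = (M *ᵥ Matrix.cramer M (fun i : Fin N => psie ψ (((i : ℕ) : ℤ) - 1 - (k : ℤ)) z)) ⟨k, hkN⟩ := by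
          simp [Matrix.mulVec, dotProduct]
      _ = (M.det • fun i : Fin N => psie ψ (((i : ℕ) : ℤ) - 1 - (k : ℤ)) z) ⟨k, hkN⟩ := by
          rw [Matrix.mulVec_cramer]
      _ = 0 := by
          simp only [Pi.smul_apply, smul_eq_mul]
          rw [psie, if_neg (by omega)]
          ring
  rw [Finset.sum_congr rfl fun j _ => hmain j, Finset.sum_sub_distrib, ← Finset.mul_sum,
    Finset.sum_add_distrib, hC, add_zero]


lemma tau_first_deriv
    (hder : ∀ m : ℕ, ∀ z ∈ I, HasDerivAt (ψ m) (deriv (ψ m) z) z)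
    (hψ_rec : ∀ n : ℕ, ∀ z ∈ I, ψ (n + 1) z =
      deriv (ψ n) z + (w z / (2 * ψ0 z)) *
        ∑ k ∈ Finset.range n, ψ k z * ψ (n - 1 - k) z)
    (N : ℕ) (hN : 1 ≤ N) (z : ℝ) (hz : z ∈ I) :
    HasDerivAt (tauShift ψ N (fun j => (j : ℕ)))
      (tauShift ψ N (fun j => if (j : ℕ) = N - 1 then N else (j : ℕ)) z) z := by
  classical
  have h := tau_hasDerivAt I w ψ0 ψ hder hψ_rec N (fun j => (j : ℕ)) z hz
  set M : Matrix (Fin N) (Fin N) ℝ :=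
    Matrix.of fun i j' : Fin N => ψ ((i : ℕ) + (j' : ℕ)) z with hM
  convert h using 1
  have hcorr : ∀ j : Fin N, ∀ k ∈ Finset.range (j : ℕ),
      (M.updateCol j fun i => ψ ((i : ℕ) + ((j : ℕ) - 1 - k)) z).det = 0 := by
    intro j k hk
    have hk := Finset.mem_range.mp hk
    have hj' : (j : ℕ) - 1 - k < N := by omega
    have hcoleq : (fun i : Fin N => ψ ((i : ℕ) + ((j : ℕ) - 1 - k)) z)
        = fun r : Fin N => M r ⟨(j : ℕ) - 1 - k, hj'⟩ := rfl
    rw [hcoleq]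
    exact Matrix.det_updateCol_eq_zero (by
      intro he
      have := congrArg Fin.val he
      simp at this
      omega)
  have hmain : (∑ j : Fin N, (M.updateCol j fun i => ψ ((i : ℕ) + (j : ℕ) + 1) z).det)
      = tauShift ψ N (fun j => if (j : ℕ) = N - 1 then N else (j : ℕ)) z := by
    have hjN : N - 1 < N := by omega
    rw [Finset.sum_eq_single (⟨N - 1, hjN⟩ : Fin N)]
    · -- the surviving term
      unfold tauShift
      congr 1
      funext r j''
      rw [Matrix.updateCol_apply]
      by_cases hj'' : j'' = (⟨N - 1, hjN⟩ : Fin N)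
      · rw [if_pos hj'']
        have : ((j'' : ℕ) = N - 1) := by rw [hj'']
        simp only [Matrix.of_apply, this, if_pos]
        congr 1
        omega
      · rw [if_neg hj'']
        have hne : (j'' : ℕ) ≠ N - 1 := by
          intro hv
          exact hj'' (Fin.ext (by simp [hv]))
        simp only [Matrix.of_apply, hM, if_neg hne]
    · intro j _ hj
      have hjv : (j : ℕ) ≠ N - 1 := by
        intro hv
        exact hj (Fin.ext (by simp [hv]))
      have hj1 : (j : ℕ) + 1 < N := by
        have := j.isLt
        omega
      have hcoleq : (fun i : Fin N => ψ ((i : ℕ) + (j : ℕ) + 1) z)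
          = fun r : Fin N => M r ⟨(j : ℕ) + 1, hj1⟩ := by
        funext r
        show ψ ((r : ℕ) + (j : ℕ) + 1) z = ψ ((r : ℕ) + ((j : ℕ) + 1)) z
        congr 1
      rw [hcoleq]
      exact Matrix.det_updateCol_eq_zero (by
        intro he
        have := congrArg Fin.val he
        simp at this)
    · intro habs
      exact absurd (Finset.mem_univ _) habs
  rw [hmain]
  rw [show (∑ j : Fin N, ∑ k ∈ Finset.range (j : ℕ), ψ k z *
      (M.updateCol j fun i => ψ ((i : ℕ) + ((j : ℕ) - 1 - k)) z).det) = 0 from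
    Finset.sum_eq_zero fun j _ => Finset.sum_eq_zero fun k hk => by
      rw [hcorr j k hk]; ring]
  ring


lemma tau_second_step
    (hder : ∀ m : ℕ, ∀ z ∈ I, HasDerivAt (ψ m) (deriv (ψ m) z) z)
    (hψ_rec : ∀ n : ℕ, ∀ z ∈ I, ψ (n + 1) z =
      deriv (ψ n) z + (w z / (2 * ψ0 z)) *
        ∑ k ∈ Finset.range n, ψ k z * ψ (n - 1 - k) z)
    (N : ℕ) (hN : 2 ≤ N) (z : ℝ) (hz : z ∈ I) :
    HasDerivAt (tauShift ψ N (fun j => if (j : ℕ) = N - 1 then N else (j : ℕ)))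
      ((tauShift ψ N (fun j => if N - 2 ≤ (j : ℕ) then (j : ℕ) + 1 else (j : ℕ)) z
        + tauShift ψ N (fun j => if (j : ℕ) = N - 1 then N + 1 else (j : ℕ)) z)
        - (w z / (2 * ψ0 z)) *
          (ψ 0 z * tauShift ψ N (fun j => (j : ℕ)) z)) z := by
  classical
  set c1 : Fin N → ℕ := fun j => if (j : ℕ) = N - 1 then N else (j : ℕ) with hc1
  have h := tau_hasDerivAt I w ψ0 ψ hder hψ_rec N c1 z hz
  set M : Matrix (Fin N) (Fin N) ℝ :=
    Matrix.of fun i j' : Fin N => ψ ((i : ℕ) + c1 j') z with hM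
  convert h using 1
  have hjA : N - 1 < N := by omega
  have hjB : N - 2 < N := by omega
  set jA : Fin N := ⟨N - 1, hjA⟩ with hjAdef
  set jB : Fin N := ⟨N - 2, hjB⟩ with hjBdef
  have hc1A : c1 jA = N := by simp [hc1, hjAdef]
  have hc1B : c1 jB = N - 2 := by
    simp only [hc1, hjBdef]
    rw [if_neg (by omega)]
  have hc1val : ∀ j : Fin N, (j : ℕ) ≠ N - 1 → c1 j = (j : ℕ) := by
    intro j hj
    simp only [hc1]
    rw [if_neg hj]
  -- main part
  have hmain : (∑ j : Fin N, (M.updateCol j fun i => ψ ((i : ℕ) + c1 j + 1) z).det)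
      = tauShift ψ N (fun j => if N - 2 ≤ (j : ℕ) then (j : ℕ) + 1 else (j : ℕ)) z
        + tauShift ψ N (fun j => if (j : ℕ) = N - 1 then N + 1 else (j : ℕ)) z := by
    have hne : jB ≠ jA := Fin.ne_of_val_ne (by simp [hjAdef, hjBdef]; omega)
    rw [← Finset.sum_subset (Finset.subset_univ ({jB, jA} : Finset (Fin N))) ?_]
    · rw [Finset.sum_insert (by simp [hne]), Finset.sum_singleton]
      congr 1
      · -- jB term
        unfold tauShift
        congr 1
        funext r j''
        rw [Matrix.updateCol_apply]
        by_cases h'' : j'' = jB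
        · rw [if_pos h'']
          have hv : (j'' : ℕ) = N - 2 := by rw [h'', hjBdef]
          simp only [Matrix.of_apply]
          rw [hc1B]
          congr 1
          rw [hv, if_pos (le_refl _)]
          omega
        · rw [if_neg h'']
          simp only [Matrix.of_apply, hM]
          congr 1
          have h1 : (j'' : ℕ) ≠ N - 2 := fun hv => h'' (Fin.ext (by simp [hjBdef, hv]))
          have h2 : (j'' : ℕ) < N := j''.isLt
          simp only [hc1]
          split_ifs <;> omega
      · -- jA term
        unfold tauShift
        congr 1
        funext r j''
        rw [Matrix.updateCol_apply]
        by_cases h'' : j'' = jA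
        · rw [if_pos h'']
          have hv : (j'' : ℕ) = N - 1 := by rw [h'', hjAdef]
          simp only [Matrix.of_apply]
          rw [hc1A, hv, if_pos rfl]
          exact congrArg (fun n => ψ n z) (by omega)
        · rw [if_neg h'']
          simp only [Matrix.of_apply, hM]
          congr 1
          have h1 : (j'' : ℕ) ≠ N - 1 := fun hv => h'' (Fin.ext (by simp [hjAdef, hv]))
          simp only [hc1]
          rw [if_neg h1, if_neg h1]
    · intro j _ hj
      simp only [Finset.mem_insert, Finset.mem_singleton] at hj
      push_neg at hj
      have h1 : (j : ℕ) ≠ N - 2 := fun hv => hj.1 (Fin.ext (by simp [hjBdef, hv]))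
      have h2 : (j : ℕ) ≠ N - 1 := fun hv => hj.2 (Fin.ext (by simp [hjAdef, hv]))
      have h3 : (j : ℕ) < N := j.isLt
      have hj1 : (j : ℕ) + 1 < N := by omega
      have hcoleq : (fun i : Fin N => ψ ((i : ℕ) + c1 j + 1) z)
          = fun r : Fin N => M r ⟨(j : ℕ) + 1, hj1⟩ := by
        funext r
        simp only [Matrix.of_apply, hM]
        congr 1
        simp only [hc1]
        split_ifs <;> omega
      rw [hcoleq]
      exact Matrix.det_updateCol_eq_zero (by
        intro he
        have h5 : (j : ℕ) + 1 = (j : ℕ) := congrArg Fin.val he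
        omega)
  -- correction part
  have hcorr : (∑ j : Fin N, ∑ k ∈ Finset.range (c1 j), ψ k z *
        (M.updateCol j fun i => ψ ((i : ℕ) + (c1 j - 1 - k)) z).det)
      = ψ 0 z * tauShift ψ N (fun j => (j : ℕ)) z := by
    rw [Finset.sum_eq_single jA]
    · rw [hc1A]
      rw [Finset.sum_eq_single 0]
      · -- k = 0 term
        congr 1
        unfold tauShift
        congr 1
        funext r j''
        rw [Matrix.updateCol_apply]
        by_cases h'' : j'' = jA
        · rw [if_pos h'', h'']
          simp only [Matrix.of_apply]
          show ψ ((r : ℕ) + (N - 1 - 0)) z = ψ ((r : ℕ) + (N - 1)) z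
          exact congrArg (fun n => ψ n z) (by omega)
        · rw [if_neg h'']
          simp only [Matrix.of_apply, hM]
          congr 1
          have h1 : (j'' : ℕ) ≠ N - 1 := fun hv => h'' (Fin.ext (by simp [hjAdef, hv]))
          simp only [hc1]
          rw [if_neg h1]
      · intro k hk hk0
        have hk := Finset.mem_range.mp hk
        have hlt : N - 1 - k < N := by omega
        have hcoleq : (fun i : Fin N => ψ ((i : ℕ) + (N - 1 - k)) z)
            = fun r : Fin N => M r ⟨N - 1 - k, hlt⟩ := by
          funext r
          simp only [Matrix.of_apply, hM]
          congr 1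
          simp only [hc1]
          rw [if_neg (show ¬((⟨N - 1 - k, hlt⟩ : Fin N) : ℕ) = N - 1 by
            show ¬(N - 1 - k = N - 1); omega)]
        rw [hcoleq, Matrix.det_updateCol_eq_zero (by
          intro he
          have h5 : N - 1 - k = N - 1 := congrArg Fin.val he
          omega)]
        ring
      · intro h0
        exact absurd (Finset.mem_range.mpr (by omega)) h0
    · intro j _ hj
      have h2 : (j : ℕ) ≠ N - 1 := fun hv => hj (Fin.ext (by simp [hjAdef, hv]))
      refine Finset.sum_eq_zero fun k hk => ?_
      have hk := Finset.mem_range.mp hk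
      rw [hc1val j h2] at hk ⊢
      have h3 : (j : ℕ) < N := j.isLt
      have hlt : (j : ℕ) - 1 - k < N := by omega
      have hcoleq : (fun i : Fin N => ψ ((i : ℕ) + ((j : ℕ) - 1 - k)) z)
          = fun r : Fin N => M r ⟨(j : ℕ) - 1 - k, hlt⟩ := by
        funext r
        simp only [Matrix.of_apply, hM]
        congr 1
        simp only [hc1]
        rw [if_neg (show ¬(((⟨(j : ℕ) - 1 - k, hlt⟩ : Fin N)) : ℕ) = N - 1 by
          show ¬((j : ℕ) - 1 - k = N - 1); omega)]
      rw [hcoleq, Matrix.det_updateCol_eq_zero (by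
        intro he
        have h5 : (j : ℕ) - 1 - k = (j : ℕ) := congrArg Fin.val he
        omega)]
      ring
    · intro habs
      exact absurd (Finset.mem_univ _) habs
  rw [hmain, hcorr]



lemma psi_smooth (I : Set ℝ) (hIopen : IsOpen I)
    (w ψ0 : ℝ → ℝ)
    (hw_smooth : ContDiffOn ℝ (⊤ : ℕ∞) w I)
    (hψ0_smooth : ContDiffOn ℝ (⊤ : ℕ∞) ψ0 I)
    (hψ0_ne : ∀ z ∈ I, ψ0 z ≠ 0)
    (ψ : ℕ → ℝ → ℝ)
    (hψ_zero : ψ 0 = ψ0)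
    (hψ_rec : ∀ n : ℕ, ∀ z ∈ I, ψ (n + 1) z =
      deriv (ψ n) z + (w z / (2 * ψ0 z)) *
        ∑ k ∈ Finset.range n, ψ k z * ψ (n - 1 - k) z) :
    ∀ n, ContDiffOn ℝ (⊤:ℕ∞) (ψ n) I := by
  intro n
  induction n using Nat.strong_induction_on with
  | _ n ih =>
    match n with
    | 0 => rw [hψ_zero]; exact hψ0_smooth.of_le (by simp)
    | (n+1) =>
      have hg : ContDiffOn ℝ (⊤:ℕ∞) (fun z => deriv (ψ n) z + (w z / (2 * ψ0 z)) *
          ∑ k ∈ Finset.range n, ψ k z * ψ (n - 1 - k) z) I := by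
        refine ContDiffOn.add ?_ (ContDiffOn.mul ?_ ?_)
        · exact (ih n (Nat.lt_succ_self n)).deriv_of_isOpen hIopen (by simp)
        · refine ContDiffOn.div (hw_smooth.of_le (by simp)) (ContDiffOn.mul contDiffOn_const (hψ0_smooth.of_le (by simp))) ?_
          intro z hz
          have := hψ0_ne z hz
          positivity
        · refine ContDiffOn.sum fun k hk => ?_
          have hk := Finset.mem_range.mp hk
          exact (ih k (by omega)).mul (ih (n - 1 - k) (by omega))
      exact hg.congr fun z hz => hψ_rec n z hz

end master

/-- Differential formula (A.2): `τ_N[0,…,N-2,N+1] + τ_N[0,…,N-3,N-1,N] = τ_N'' + (w/2) τ_N`. -/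
theorem tau_shift_second_deriv_sum
    (I : Set ℝ) (hIopen : IsOpen I) (hIconn : I.OrdConnected)
    (w ψ0 : ℝ → ℝ)
    (hw_smooth : ContDiffOn ℝ (⊤ : ℕ∞) w I)
    (hψ0_smooth : ContDiffOn ℝ (⊤ : ℕ∞) ψ0 I)
    (hψ0_ne : ∀ z ∈ I, ψ0 z ≠ 0)
    (ψ : ℕ → ℝ → ℝ)
    (hψ_zero : ψ 0 = ψ0)
    (hψ_rec : ∀ n : ℕ, ∀ z ∈ I, ψ (n + 1) z =
      deriv (ψ n) z + (w z / (2 * ψ0 z)) *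
        ∑ k ∈ Finset.range n, ψ k z * ψ (n - 1 - k) z)
    (N : ℕ) (hN : 2 ≤ N) :
    ∀ z ∈ I,
      tauShift ψ N (fun j => if (j : ℕ) = N - 1 then N + 1 else (j : ℕ)) z
        + tauShift ψ N (fun j => if N - 2 ≤ (j : ℕ) then (j : ℕ) + 1 else (j : ℕ)) z
      = deriv (deriv (fun t => tauShift ψ N (fun j => (j : ℕ)) t)) z
        + (w z / 2) * tauShift ψ N (fun j => (j : ℕ)) z := by
  intro z hz
  have hsm := psi_smooth I hIopen w ψ0 hw_smooth hψ0_smooth hψ0_ne ψ hψ_zero hψ_rec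
  have hder : ∀ m : ℕ, ∀ t ∈ I, HasDerivAt (ψ m) (deriv (ψ m) t) t := by
    intro m t ht
    exact (((hsm m).contDiffAt (hIopen.mem_nhds ht)).differentiableAt
      (by simp)).hasDerivAt
  have h1 : ∀ t ∈ I, HasDerivAt (tauShift ψ N (fun j => (j : ℕ)))
      (tauShift ψ N (fun j => if (j : ℕ) = N - 1 then N else (j : ℕ)) t) t :=
    fun t ht => tau_first_deriv I w ψ0 ψ hder hψ_rec N (by omega) t ht
  have h2 := tau_second_step I w ψ0 ψ hder hψ_rec N hN z hz
  have hev : (deriv (fun t => tauShift ψ N (fun j => (j : ℕ)) t))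
      =ᶠ[nhds z] (tauShift ψ N (fun j => if (j : ℕ) = N - 1 then N else (j : ℕ))) :=
    Filter.eventually_of_mem (hIopen.mem_nhds hz) fun t ht => (h1 t ht).deriv
  have hdd : deriv (deriv (fun t => tauShift ψ N (fun j => (j : ℕ)) t)) z
      = deriv (tauShift ψ N (fun j => if (j : ℕ) = N - 1 then N else (j : ℕ))) z :=
    hev.deriv_eq
  rw [hdd, h2.deriv, hψ_zero]
  have h0 : ψ0 z ≠ 0 := hψ0_ne z hz
  field_simp
  ring
end

section
/- Let w be a smooth function on an open interval I ⊆ ℝ and let ψ_0 be a nowhere-vanishing smooth function on I satisfying (L1) and (L2) with w and a parameter α; define the sequence ψ_n by the recursion. Then, with the convention ψ_{−1} = 0, for every n ≥ 1 the identity ψ_n' = (2z − w)·ψ_{n−1} + 2(n−1)·ψ_{n−2} − ((w' − 4α)/(4ψ_0))·Σ_{k=0}^{n−2} ψ_k ψ_{n−2−k} holds on I. -/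
/-- reflection of a convolution-type sum -/
theorem sum_reflect_mul (f g : ℕ → ℝ) (m : ℕ) :
    ∑ k ∈ Finset.range m, f k * g (m - 1 - k) = ∑ k ∈ Finset.range m, g k * f (m - 1 - k) := by
  calc ∑ k ∈ Finset.range m, f k * g (m - 1 - k)
      = ∑ k ∈ Finset.range m, (fun j => g j * f (m - 1 - j)) (m - 1 - k) := by
        refine Finset.sum_congr rfl fun k hk => ?_
        have hk' := Finset.mem_range.mp hk
        simp only []
        rw [show m - 1 - (m - 1 - k) = k by omega, mul_comm]
    _ = ∑ k ∈ Finset.range m, g k * f (m - 1 - k) :=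
        Finset.sum_range_reflect (fun j => g j * f (m - 1 - j)) m

/-- weighted symmetrization identity -/
theorem sum_weighted_mul (f : ℕ → ℝ) (r : ℕ) :
    2 * ∑ k ∈ Finset.range r, ((k : ℝ) + 1) * (f k * f (r - 1 - k))
      = ((r : ℝ) + 1) * ∑ k ∈ Finset.range r, f k * f (r - 1 - k) := by
  have hrefl : ∑ k ∈ Finset.range r, ((k : ℝ) + 1) * (f k * f (r - 1 - k))
      = ∑ k ∈ Finset.range r, ((r : ℝ) - k) * (f k * f (r - 1 - k)) := by
    calc ∑ k ∈ Finset.range r, ((k : ℝ) + 1) * (f k * f (r - 1 - k))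
        = ∑ k ∈ Finset.range r,
            (fun j => ((r : ℝ) - j) * (f j * f (r - 1 - j))) (r - 1 - k) := by
          refine Finset.sum_congr rfl fun k hk => ?_
          have hk' := Finset.mem_range.mp hk
          simp only []
          rw [show r - 1 - (r - 1 - k) = k by omega]
          have : ((r - 1 - k : ℕ) : ℝ) = (r : ℝ) - 1 - k := by
            rw [Nat.sub_sub, Nat.cast_sub (by omega)]
            push_cast; ring
          rw [this]
          ring
      _ = _ := by
          exact Finset.sum_range_reflect (fun j => ((r : ℝ) - (j:ℕ)) * (f j * f (r - 1 - j))) r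
  rw [two_mul]
  nth_rewrite 2 [hrefl]
  rw [← Finset.sum_add_distrib, Finset.mul_sum]
  refine Finset.sum_congr rfl fun k hk => ?_
  ring

def psiSum (ψ : ℕ → ℝ → ℝ) (n : ℕ) (z : ℝ) : ℝ :=
  ∑ k ∈ Finset.range n, ψ k z * ψ (n - 1 - k) z

structure PsiSetup (I : Set ℝ) (α : ℝ) (w ψ0 : ℝ → ℝ) (ψ : ℕ → ℝ → ℝ) : Prop where
  hIopen : IsOpen I
  hw : ContDiffOn ℝ (⊤:ℕ∞) w I
  hψ0 : ContDiffOn ℝ (⊤:ℕ∞) ψ0 I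
  hne : ∀ z ∈ I, ψ0 z ≠ 0
  hL1 : ∀ z ∈ I, 2 * w z * deriv ψ0 z - deriv w z * ψ0 z - 4 * α * ψ0 z = 0
  hL2 : ∀ z ∈ I, deriv (deriv ψ0) z + (w z - 2 * z) * ψ0 z = 0
  hzero : ψ 0 = ψ0
  hrec : ∀ n : ℕ, ∀ z ∈ I, ψ (n + 1) z = deriv (ψ n) z + (w z / (2 * ψ0 z)) * psiSum ψ n z

namespace PsiSetup

variable {I : Set ℝ} {α : ℝ} {w ψ0 : ℝ → ℝ} {ψ : ℕ → ℝ → ℝ}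

theorem smooth (h : PsiSetup I α w ψ0 ψ) : ∀ n, ContDiffOn ℝ (⊤:ℕ∞) (ψ n) I := by
  intro n
  induction n using Nat.strong_induction_on with
  | _ n ih =>
    match n with
    | 0 => rw [h.hzero]; exact h.hψ0
    | n + 1 =>
      have hF : ContDiffOn ℝ (⊤:ℕ∞) (fun z => deriv (ψ n) z + (w z / (2 * ψ0 z)) * psiSum ψ n z) I := by
        refine ContDiffOn.add ((ih n (by omega)).deriv_of_isOpen h.hIopen (by simp)) ?_
        refine ContDiffOn.mul (h.hw.div (ContDiffOn.mul contDiffOn_const h.hψ0) ?_) ?_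
        · intro z hz; simpa using h.hne z hz
        · exact ContDiffOn.sum fun k hk => (ih k (by have := Finset.mem_range.mp hk; omega)).mul (ih (n - 1 - k) (by omega))
      exact hF.congr (fun z hz => h.hrec n z hz)

theorem diffAt (h : PsiSetup I α w ψ0 ψ) (n : ℕ) {z : ℝ} (hz : z ∈ I) :
    DifferentiableAt ℝ (ψ n) z :=
  ((h.smooth n).differentiableOn (by simp)).differentiableAt (h.hIopen.mem_nhds hz)

theorem diffAt_deriv (h : PsiSetup I α w ψ0 ψ) (n : ℕ) {z : ℝ} (hz : z ∈ I) :
    DifferentiableAt ℝ (deriv (ψ n)) z :=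
  (((h.smooth n).deriv_of_isOpen (m := ((⊤:ℕ∞) : WithTop ℕ∞)) h.hIopen (by simp)).differentiableOn (by simp)).differentiableAt (h.hIopen.mem_nhds hz)

theorem diffAt_w (h : PsiSetup I α w ψ0 ψ) {z : ℝ} (hz : z ∈ I) :
    DifferentiableAt ℝ w z :=
  (h.hw.differentiableOn (by simp)).differentiableAt (h.hIopen.mem_nhds hz)

theorem diffAt_dw (h : PsiSetup I α w ψ0 ψ) {z : ℝ} (hz : z ∈ I) :
    DifferentiableAt ℝ (deriv w) z :=
  ((h.hw.deriv_of_isOpen (m := ((⊤:ℕ∞) : WithTop ℕ∞)) h.hIopen (by simp)).differentiableOn (by simp)).differentiableAt (h.hIopen.mem_nhds hz)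

theorem diffAt_ψ0 (h : PsiSetup I α w ψ0 ψ) {z : ℝ} (hz : z ∈ I) :
    DifferentiableAt ℝ ψ0 z :=
  (h.hψ0.differentiableOn (by simp)).differentiableAt (h.hIopen.mem_nhds hz)

theorem diffAt_dψ0 (h : PsiSetup I α w ψ0 ψ) {z : ℝ} (hz : z ∈ I) :
    DifferentiableAt ℝ (deriv ψ0) z :=
  ((h.hψ0.deriv_of_isOpen (m := ((⊤:ℕ∞) : WithTop ℕ∞)) h.hIopen (by simp)).differentiableOn (by simp)).differentiableAt (h.hIopen.mem_nhds hz)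

/-- derivative of the sum `psiSum ψ n` -/
theorem hasDerivAt_psiSum (h : PsiSetup I α w ψ0 ψ) (n : ℕ) {z : ℝ} (hz : z ∈ I) :
    HasDerivAt (psiSum ψ n)
      (∑ k ∈ Finset.range n,
        (deriv (ψ k) z * ψ (n - 1 - k) z + ψ k z * deriv (ψ (n - 1 - k)) z)) z := by
  have : HasDerivAt (fun x => ∑ k ∈ Finset.range n, ψ k x * ψ (n - 1 - k) x)
      (∑ k ∈ Finset.range n,
        (deriv (ψ k) z * ψ (n - 1 - k) z + ψ k z * deriv (ψ (n - 1 - k)) z)) z := by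
    refine HasDerivAt.fun_sum fun k _ => ?_
    exact ((h.diffAt k hz).hasDerivAt).mul ((h.diffAt (n - 1 - k) hz).hasDerivAt)
  exact this

/-- derivative of `c = w / (2 ψ0)` equals `d = (w' - 4α)/(4 ψ0)` -/
theorem hasDerivAt_c (h : PsiSetup I α w ψ0 ψ) {z : ℝ} (hz : z ∈ I) :
    HasDerivAt (fun x => w x / (2 * ψ0 x)) ((deriv w z - 4 * α) / (4 * ψ0 z)) z := by
  have h0 := h.hne z hz
  have hd : HasDerivAt (fun x => w x / (2 * ψ0 x))
      ((deriv w z * (2 * ψ0 z) - w z * (2 * deriv ψ0 z)) / (2 * ψ0 z)^2) z :=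
    ((h.diffAt_w hz).hasDerivAt).div (((h.diffAt_ψ0 hz).hasDerivAt).const_mul 2) (by simpa using h0)
  convert hd using 1
  have hL1z := h.hL1 z hz
  field_simp
  linear_combination 2 * hL1z

/-- derivative of `d = (w' - 4α)/(4 ψ0)` equals `(2z - w) * c` -/
theorem hasDerivAt_d (h : PsiSetup I α w ψ0 ψ) {z : ℝ} (hz : z ∈ I) :
    HasDerivAt (fun x => (deriv w x - 4 * α) / (4 * ψ0 x))
      ((2 * z - w z) * (w z / (2 * ψ0 z))) z := by
  have h0 := h.hne z hz
  -- second derivative of w from differentiating L1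
  have hG : deriv (fun x => 2 * w x * deriv ψ0 x - deriv w x * ψ0 x - 4 * α * ψ0 x) z = 0 := by
    have heq : (fun x => 2 * w x * deriv ψ0 x - deriv w x * ψ0 x - 4 * α * ψ0 x)
        =ᶠ[nhds z] (fun _ => (0:ℝ)) := by
      filter_upwards [h.hIopen.mem_nhds hz] with x hx using h.hL1 x hx
    rw [heq.deriv_eq]; simp
  have hGd : HasDerivAt (fun x => 2 * w x * deriv ψ0 x - deriv w x * ψ0 x - 4 * α * ψ0 x)
      ((2 * deriv w z) * deriv ψ0 z + (2 * w z) * deriv (deriv ψ0) z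
        - (deriv (deriv w) z * ψ0 z + deriv w z * deriv ψ0 z)
        - 4 * α * deriv ψ0 z) z := by
    exact ((((h.diffAt_w hz).hasDerivAt.const_mul 2).mul (h.diffAt_dψ0 hz).hasDerivAt).sub
      ((h.diffAt_dw hz).hasDerivAt.mul (h.diffAt_ψ0 hz).hasDerivAt)).sub
      ((h.diffAt_ψ0 hz).hasDerivAt.const_mul (4*α))
  have hw2 : (2 * deriv w z) * deriv ψ0 z + (2 * w z) * deriv (deriv ψ0) z
        - (deriv (deriv w) z * ψ0 z + deriv w z * deriv ψ0 z)
        - 4 * α * deriv ψ0 z = 0 := by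
    rw [← hGd.deriv]; exact hG
  have hL2z := h.hL2 z hz
  have hd : HasDerivAt (fun x => (deriv w x - 4 * α) / (4 * ψ0 x))
      (((deriv (deriv w) z) * (4 * ψ0 z) - (deriv w z - 4 * α) * (4 * deriv ψ0 z)) / (4 * ψ0 z)^2) z := by
    refine HasDerivAt.div ?_ (((h.diffAt_ψ0 hz).hasDerivAt).const_mul 4) (by simpa using h0)
    simpa using ((h.diffAt_dw hz).hasDerivAt).sub_const (4*α)
  convert hd using 1
  field_simp
  linear_combination 2 * hw2 - 4 * w z * hL2z

theorem rec_deriv (h : PsiSetup I α w ψ0 ψ) (n : ℕ) {z : ℝ} (hz : z ∈ I) :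
    deriv (ψ n) z = ψ (n + 1) z - (w z / (2 * ψ0 z)) * psiSum ψ n z := by
  have := h.hrec n z hz; linarith

theorem psi_one (h : PsiSetup I α w ψ0 ψ) {z : ℝ} (hz : z ∈ I) :
    ψ 1 z = deriv ψ0 z := by
  have := h.hrec 0 z hz
  simp only [psiSum, Finset.range_zero, Finset.sum_empty, mul_zero, add_zero] at this
  rw [this, h.hzero]

/-- derivative of the recursion: formula for `deriv (ψ (n+1)) z`. -/
theorem deriv_succ (h : PsiSetup I α w ψ0 ψ) (n : ℕ) {z : ℝ} (hz : z ∈ I) :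
    deriv (ψ (n + 1)) z = deriv (deriv (ψ n)) z
      + ((deriv w z - 4 * α) / (4 * ψ0 z)) * psiSum ψ n z
      + (w z / (2 * ψ0 z)) *
          ∑ k ∈ Finset.range n,
            (deriv (ψ k) z * ψ (n - 1 - k) z + ψ k z * deriv (ψ (n - 1 - k)) z) := by
  have hF : HasDerivAt (fun x => deriv (ψ n) x + (w x / (2 * ψ0 x)) * psiSum ψ n x)
      (deriv (deriv (ψ n)) z
        + (((deriv w z - 4 * α) / (4 * ψ0 z)) * psiSum ψ n z
          + (w z / (2 * ψ0 z)) *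
            ∑ k ∈ Finset.range n,
              (deriv (ψ k) z * ψ (n - 1 - k) z + ψ k z * deriv (ψ (n - 1 - k)) z))) z :=
    ((h.diffAt_deriv n hz).hasDerivAt).add ((h.hasDerivAt_c hz).mul (h.hasDerivAt_psiSum n hz))
  have hev : ψ (n + 1) =ᶠ[nhds z] (fun x => deriv (ψ n) x + (w x / (2 * ψ0 x)) * psiSum ψ n x) := by
    filter_upwards [h.hIopen.mem_nhds hz] with x hx using h.hrec n x hx
  rw [hev.deriv_eq, hF.deriv]
  ring

/-- second derivative of `ψ n`, given that the derivative formula holds for `n` on `I`. -/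
theorem deriv2 (h : PsiSetup I α w ψ0 ψ) (n : ℕ) {z : ℝ} (hz : z ∈ I)
    (hP : ∀ x ∈ I, deriv (ψ n) x =
      (2 * x - w x) * ψ (n - 1) x + 2 * ((n : ℝ) - 1) * ψ (n - 2) x
        - ((deriv w x - 4 * α) / (4 * ψ0 x)) * psiSum ψ (n - 1) x) :
    deriv (deriv (ψ n)) z =
      (2 - deriv w z) * ψ (n - 1) z + (2 * z - w z) * deriv (ψ (n - 1)) z
        + 2 * ((n : ℝ) - 1) * deriv (ψ (n - 2)) z
        - (((2 * z - w z) * (w z / (2 * ψ0 z))) * psiSum ψ (n - 1) z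
           + ((deriv w z - 4 * α) / (4 * ψ0 z)) *
              ∑ k ∈ Finset.range (n - 1),
                (deriv (ψ k) z * ψ (n - 1 - 1 - k) z + ψ k z * deriv (ψ (n - 1 - 1 - k)) z)) := by
  have hev : deriv (ψ n) =ᶠ[nhds z] (fun x =>
      (2 * x - w x) * ψ (n - 1) x + 2 * ((n : ℝ) - 1) * ψ (n - 2) x
        - ((deriv w x - 4 * α) / (4 * ψ0 x)) * psiSum ψ (n - 1) x) := by
    filter_upwards [h.hIopen.mem_nhds hz] with x hx using hP x hx
  have hF : HasDerivAt (fun x =>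
      (2 * x - w x) * ψ (n - 1) x + 2 * ((n : ℝ) - 1) * ψ (n - 2) x
        - ((deriv w x - 4 * α) / (4 * ψ0 x)) * psiSum ψ (n - 1) x)
      (((2 * 1 - deriv w z) * ψ (n - 1) z + (2 * z - w z) * deriv (ψ (n - 1)) z
        + 2 * ((n : ℝ) - 1) * deriv (ψ (n - 2)) z)
        - (((2 * z - w z) * (w z / (2 * ψ0 z))) * psiSum ψ (n - 1) z
           + ((deriv w z - 4 * α) / (4 * ψ0 z)) *
              ∑ k ∈ Finset.range (n - 1),
                (deriv (ψ k) z * ψ (n - 1 - 1 - k) z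
                  + ψ k z * deriv (ψ (n - 1 - 1 - k)) z))) z := by
    refine HasDerivAt.sub (HasDerivAt.add ?_ ?_) ?_
    · exact (((hasDerivAt_id z).const_mul 2).sub (h.diffAt_w hz).hasDerivAt).mul
        (h.diffAt (n - 1) hz).hasDerivAt
    · exact ((h.diffAt (n - 2) hz).hasDerivAt).const_mul (2 * ((n : ℝ) - 1))
    · exact (h.hasDerivAt_d hz).mul (h.hasDerivAt_psiSum (n - 1) hz)
  rw [hev.deriv_eq, hF.deriv]
  ring

/-- "recursion form" of the derivative of `psiSum`. -/
theorem lemA (h : PsiSetup I α w ψ0 ψ) (m : ℕ) {z : ℝ} (hz : z ∈ I) :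
    ∑ k ∈ Finset.range m, (deriv (ψ k) z * ψ (m - 1 - k) z + ψ k z * deriv (ψ (m - 1 - k)) z)
      = 2 * (psiSum ψ (m + 1) z - ψ 0 z * ψ m z)
        - 2 * (w z / (2 * ψ0 z)) * ∑ k ∈ Finset.range m, psiSum ψ k z * ψ (m - 1 - k) z := by
  have e0 : ∑ k ∈ Finset.range m,
        (deriv (ψ k) z * ψ (m - 1 - k) z + ψ k z * deriv (ψ (m - 1 - k)) z)
      = ∑ k ∈ Finset.range m,
          (ψ (k + 1) z * ψ (m - 1 - k) z + ψ k z * ψ (m - k) z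
            - (w z / (2 * ψ0 z)) * (psiSum ψ k z * ψ (m - 1 - k) z)
            - (w z / (2 * ψ0 z)) * (ψ k z * psiSum ψ (m - 1 - k) z)) := by
    refine Finset.sum_congr rfl fun k hk => ?_
    have hk' := Finset.mem_range.mp hk
    rw [h.rec_deriv k hz, h.rec_deriv (m - 1 - k) hz, show m - 1 - k + 1 = m - k by omega]
    ring
  have e1 : psiSum ψ (m + 1) z = ψ m z * ψ 0 z + ∑ k ∈ Finset.range m, ψ k z * ψ (m - k) z := by
    rw [psiSum]
    simp only [Nat.add_sub_cancel]
    rw [Finset.sum_range_succ, Nat.sub_self]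
    ring
  have e2 : ∑ k ∈ Finset.range m, ψ (k + 1) z * ψ (m - 1 - k) z
      = ∑ k ∈ Finset.range m, ψ k z * ψ (m - k) z := by
    calc ∑ k ∈ Finset.range m, ψ (k + 1) z * ψ (m - 1 - k) z
        = ∑ k ∈ Finset.range m, (fun j => ψ j z * ψ (m - j) z) (m - 1 - k) := by
          refine Finset.sum_congr rfl fun k hk => ?_
          have hk' := Finset.mem_range.mp hk
          simp only []
          rw [show m - (m - 1 - k) = k + 1 by omega, mul_comm]
      _ = _ := by exact Finset.sum_range_reflect (fun j => ψ j z * ψ (m - j) z) m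
  have e3 : ∑ k ∈ Finset.range m, ψ k z * psiSum ψ (m - 1 - k) z
      = ∑ k ∈ Finset.range m, psiSum ψ k z * ψ (m - 1 - k) z :=
    _root_.sum_reflect_mul (fun j => ψ j z) (fun j => psiSum ψ j z) m
  rw [e0]
  simp only [Finset.sum_sub_distrib, ← Finset.mul_sum, Finset.sum_add_distrib]
  linear_combination e2 - (w z / (2 * ψ0 z)) * e3 - 2 * e1

/-- "induction form" of the derivative of `psiSum`. -/
theorem lemB (h : PsiSetup I α w ψ0 ψ) (m : ℕ) {z : ℝ} (hz : z ∈ I)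
    (hP : ∀ j, 1 ≤ j → j < m + 1 → deriv (ψ j) z =
      (2 * z - w z) * ψ (j - 1) z + 2 * ((j : ℝ) - 1) * ψ (j - 2) z
        - ((deriv w z - 4 * α) / (4 * ψ0 z)) * psiSum ψ (j - 1) z) :
    ∑ k ∈ Finset.range (m + 1),
        (deriv (ψ k) z * ψ (m - k) z + ψ k z * deriv (ψ (m - k)) z)
      = 2 * deriv ψ0 z * ψ m z + 2 * (2 * z - w z) * psiSum ψ m z
        + 2 * (m : ℝ) * psiSum ψ (m - 1) z
        - 2 * ((deriv w z - 4 * α) / (4 * ψ0 z)) *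
            ∑ k ∈ Finset.range m, psiSum ψ k z * ψ (m - 1 - k) z := by
  have hd2 : ∑ k ∈ Finset.range (m + 1), ψ k z * deriv (ψ (m - k)) z
      = ∑ k ∈ Finset.range (m + 1), deriv (ψ k) z * ψ (m - k) z := by
    have := _root_.sum_reflect_mul (fun j => ψ j z) (fun j => deriv (ψ j) z) (m + 1)
    simp only [Nat.add_sub_cancel] at this
    exact this
  have hpeel : ∑ k ∈ Finset.range (m + 1), deriv (ψ k) z * ψ (m - k) z
      = (∑ k ∈ Finset.range m, deriv (ψ (k + 1)) z * ψ (m - (k + 1)) z)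
        + deriv ψ0 z * ψ m z := by
    rw [Finset.sum_range_succ' (fun k => deriv (ψ k) z * ψ (m - k) z) m]
    simp [h.hzero]
  have hsub : ∑ k ∈ Finset.range m, deriv (ψ (k + 1)) z * ψ (m - (k + 1)) z
      = (2 * z - w z) * psiSum ψ m z
        + ∑ k ∈ Finset.range m, 2 * (k : ℝ) * (ψ (k - 1) z * ψ (m - 1 - k) z)
        - ((deriv w z - 4 * α) / (4 * ψ0 z)) *
            ∑ k ∈ Finset.range m, psiSum ψ k z * ψ (m - 1 - k) z := by
    have e : ∀ k ∈ Finset.range m, deriv (ψ (k + 1)) z * ψ (m - (k + 1)) z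
        = (2 * z - w z) * (ψ k z * ψ (m - 1 - k) z)
          + 2 * (k : ℝ) * (ψ (k - 1) z * ψ (m - 1 - k) z)
          - ((deriv w z - 4 * α) / (4 * ψ0 z)) * (psiSum ψ k z * ψ (m - 1 - k) z) := by
      intro k hk
      have hk' := Finset.mem_range.mp hk
      rw [hP (k + 1) (by omega) (by omega),
        show m - (k + 1) = m - 1 - k by omega, show k + 1 - 1 = k by omega,
        show k + 1 - 2 = k - 1 by omega]
      push_cast
      ring
    rw [Finset.sum_congr rfl e, Finset.sum_sub_distrib, Finset.sum_add_distrib,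
      ← Finset.mul_sum, ← Finset.mul_sum]
    rw [psiSum]
  have hw2 : ∑ k ∈ Finset.range m, 2 * (k : ℝ) * (ψ (k - 1) z * ψ (m - 1 - k) z)
      = (m : ℝ) * psiSum ψ (m - 1) z := by
    cases m with
    | zero => simp [psiSum]
    | succ j =>
      rw [Finset.sum_range_succ' (fun k => 2 * (k : ℝ) * (ψ (k - 1) z * ψ (j + 1 - 1 - k) z)) j]
      have e : ∀ k ∈ Finset.range j, 2 * ((k + 1 : ℕ) : ℝ) * (ψ (k + 1 - 1) z * ψ (j + 1 - 1 - (k + 1)) z)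
          = ((k : ℝ) + 1) * (ψ k z * ψ (j - 1 - k) z) + ((k : ℝ) + 1) * (ψ k z * ψ (j - 1 - k) z) := by
        intro k hk
        have hk' := Finset.mem_range.mp hk
        rw [show k + 1 - 1 = k by omega, show j + 1 - 1 - (k + 1) = j - 1 - k by omega]
        push_cast
        ring
      rw [Finset.sum_congr rfl e]
      have hws := _root_.sum_weighted_mul (fun i => ψ i z) j
      simp only [Finset.sum_add_distrib] at *
      simp only [Nat.cast_zero, mul_zero, zero_mul, add_zero, Nat.add_sub_cancel]
      rw [psiSum]
      push_cast
      linear_combination hws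
  calc ∑ k ∈ Finset.range (m + 1),
        (deriv (ψ k) z * ψ (m - k) z + ψ k z * deriv (ψ (m - k)) z)
      = (∑ k ∈ Finset.range (m + 1), deriv (ψ k) z * ψ (m - k) z)
        + ∑ k ∈ Finset.range (m + 1), ψ k z * deriv (ψ (m - k)) z := Finset.sum_add_distrib
    _ = 2 * ∑ k ∈ Finset.range (m + 1), deriv (ψ k) z * ψ (m - k) z := by rw [hd2]; ring
    _ = 2 * ((∑ k ∈ Finset.range m, deriv (ψ (k + 1)) z * ψ (m - (k + 1)) z)
        + deriv ψ0 z * ψ m z) := by rw [hpeel]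
    _ = _ := by rw [hsub]; linear_combination 2 * hw2

theorem main (h : PsiSetup I α w ψ0 ψ) : ∀ n : ℕ, 1 ≤ n → ∀ z ∈ I,
    deriv (ψ n) z = (2 * z - w z) * ψ (n - 1) z + 2 * ((n : ℝ) - 1) * ψ (n - 2) z
      - ((deriv w z - 4 * α) / (4 * ψ0 z)) * psiSum ψ (n - 1) z := by
  intro n
  induction n using Nat.strong_induction_on with
  | _ n ih =>
    intro hn z hz
    match n, hn, ih with
    | 1, _, _ =>
      have hev : ψ 1 =ᶠ[nhds z] deriv (ψ 0) := by
        filter_upwards [h.hIopen.mem_nhds hz] with x hx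
        rw [h.hrec 0 x hx]
        simp [psiSum]
      rw [hev.deriv_eq]
      show deriv (deriv (ψ 0)) z = (2 * z - w z) * ψ 0 z + 2 * (((1:ℕ):ℝ) - 1) * ψ 0 z
        - ((deriv w z - 4 * α) / (4 * ψ0 z)) * psiSum ψ 0 z
      rw [h.hzero]
      simp [psiSum]
      linarith [h.hL2 z hz]
    | (m + 2), _, ih =>
      have h0 := h.hne z hz
      have hL1z := h.hL1 z hz
      have hP : ∀ x ∈ I, deriv (ψ (m + 1)) x =
          (2 * x - w x) * ψ (m + 1 - 1) x + 2 * (((m + 1 : ℕ) : ℝ) - 1) * ψ (m + 1 - 2) x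
            - ((deriv w x - 4 * α) / (4 * ψ0 x)) * psiSum ψ (m + 1 - 1) x :=
        fun x hx => ih (m + 1) (by omega) (by omega) x hx
      have h2 := h.deriv2 (m + 1) hz hP
      have hds := h.deriv_succ (m + 1) hz
      have hA := h.lemA m hz
      have hB := h.lemB m hz (fun j h1 h2 => ih j (by omega) h1 z hz)
      have hrd := h.rec_deriv m hz
      rw [h.hzero] at hA
      simp only [Nat.add_sub_cancel, show m + 1 - 2 = m - 1 from rfl,
        show m + 1 + 1 = m + 2 from rfl, show m + 2 - 1 = m + 1 from rfl,
        show m + 2 - 2 = m from rfl] at h2 hds ⊢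
      have hcase : 2 * (((m + 1 : ℕ) : ℝ) - 1) * deriv (ψ (m - 1)) z
          = 2 * (((m + 1 : ℕ) : ℝ) - 1) * (ψ m z - (w z / (2 * ψ0 z)) * psiSum ψ (m - 1) z) := by
        cases m with
        | zero => norm_num
        | succ j => rw [show j + 1 - 1 = j from rfl, h.rec_deriv j hz]
      have hkey0 : -(deriv w z) + 2 * ((deriv w z - 4 * α) / (4 * ψ0 z)) * ψ0 z
          + 2 * (w z / (2 * ψ0 z)) * deriv ψ0 z = 0 := by
        field_simp
        linear_combination 2 * hL1z
      have hkey : -(deriv w z) * ψ m z + 2 * ((deriv w z - 4 * α) / (4 * ψ0 z)) * ψ0 z * ψ m z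
          + 2 * (w z / (2 * ψ0 z)) * deriv ψ0 z * ψ m z = 0 := by
        linear_combination (ψ m z) * hkey0
      rw [hds, h2, hB, hA, hrd, hcase]
      push_cast
      linear_combination hkey

end PsiSetup


/-- The alternative derivative formula for the sequence `ψ_n`: for `n ≥ 1`,
`ψ_n' = (2z - w) ψ_{n-1} + 2(n-1) ψ_{n-2} - ((w' - 4α)/(4ψ_0)) Σ_{k=0}^{n-2} ψ_k ψ_{n-2-k}`
(with the convention `ψ_{-1} = 0`; for `n = 1` the coefficient `2(n-1)` vanishes, so the
term `ψ_{n-2}` is harmless). -/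
theorem psi_deriv_formula
    (I : Set ℝ) (hIopen : IsOpen I) (hIconn : I.OrdConnected)
    (α : ℝ) (w ψ0 : ℝ → ℝ)
    (hw_smooth : ContDiffOn ℝ (⊤ : ℕ∞) w I)
    (hψ0_smooth : ContDiffOn ℝ (⊤ : ℕ∞) ψ0 I)
    (hψ0_ne : ∀ z ∈ I, ψ0 z ≠ 0)
    (hL1 : ∀ z ∈ I, 2 * w z * deriv ψ0 z - deriv w z * ψ0 z - 4 * α * ψ0 z = 0)
    (hL2 : ∀ z ∈ I, deriv (deriv ψ0) z + (w z - 2 * z) * ψ0 z = 0)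
    (ψ : ℕ → ℝ → ℝ)
    (hψ_zero : ψ 0 = ψ0)
    (hψ_rec : ∀ n : ℕ, ∀ z ∈ I, ψ (n + 1) z =
      deriv (ψ n) z + (w z / (2 * ψ0 z)) *
        ∑ k ∈ Finset.range n, ψ k z * ψ (n - 1 - k) z) :
    ∀ n : ℕ, 1 ≤ n → ∀ z ∈ I,
      deriv (ψ n) z =
        (2 * z - w z) * ψ (n - 1) z + 2 * ((n : ℝ) - 1) * ψ (n - 2) z
          - ((deriv w z - 4 * α) / (4 * ψ0 z)) *
            ∑ k ∈ Finset.range (n - 1), ψ k z * ψ (n - 2 - k) z := by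
  have h : PsiSetup I α w ψ0 ψ :=
    ⟨hIopen, hw_smooth.of_le (by simp), hψ0_smooth.of_le (by simp), hψ0_ne, hL1, hL2, hψ_zero,
      fun n z hz => hψ_rec n z hz⟩
  intro n hn z hz
  rw [h.main n hn z hz]
  have hS : psiSum ψ (n - 1) z = ∑ k ∈ Finset.range (n - 1), ψ k z * ψ (n - 2 - k) z :=
    Finset.sum_congr rfl fun k hk => by
      rw [show n - 1 - 1 - k = n - 2 - k by omega]
  rw [hS]
end

section
/- Let w be a smooth, nowhere-vanishing solution of P_XXXIV[α] on an open interval I ⊆ ℝ, and let ψ be a smooth function on I satisfying (L1): 2w·ψ' − w'·ψ − 4α·ψ = 0. Then ψ also satisfies (L2): ψ'' + (w − 2z)·ψ = 0 on I. -/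
/-- If `w` is a nowhere-vanishing smooth solution of P_XXXIV[α] on an open interval `I`
and `ψ` is a smooth function satisfying the linear equation (L1), then `ψ` also satisfies
the linear equation (L2) on `I`. -/
theorem L1_implies_L2
    (I : Set ℝ) (hIopen : IsOpen I) (hIconn : I.OrdConnected)
    (α : ℝ) (w ψ : ℝ → ℝ)
    (hw_smooth : ContDiffOn ℝ (⊤ : ℕ∞) w I)
    (hw_ne : ∀ z ∈ I, w z ≠ 0)
    (hw_P34 : ∀ z ∈ I,
      2 * w z * deriv (deriv w) z - (deriv w z) ^ 2 + 4 * (w z) ^ 3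
        - 8 * z * (w z) ^ 2 + 16 * α ^ 2 = 0)
    (hψ_smooth : ContDiffOn ℝ (⊤ : ℕ∞) ψ I)
    (hL1 : ∀ z ∈ I, 2 * w z * deriv ψ z - deriv w z * ψ z - 4 * α * ψ z = 0) :
    ∀ z ∈ I, deriv (deriv ψ) z + (w z - 2 * z) * ψ z = 0 := by
  intro z hz
  have hmem : I ∈ nhds z := hIopen.mem_nhds hz
  have hw'S : ContDiffOn ℝ (⊤ : ℕ∞) (deriv w) I := hw_smooth.deriv_of_isOpen hIopen (by simp)
  have hψ'S : ContDiffOn ℝ (⊤ : ℕ∞) (deriv ψ) I := hψ_smooth.deriv_of_isOpen hIopen (by simp)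
  have hdw : DifferentiableAt ℝ w z := (hw_smooth.contDiffAt hmem).differentiableAt (by simp)
  have hdψ : DifferentiableAt ℝ ψ z := (hψ_smooth.contDiffAt hmem).differentiableAt (by simp)
  have hdw' : DifferentiableAt ℝ (deriv w) z := (hw'S.contDiffAt hmem).differentiableAt (by simp)
  have hdψ' : DifferentiableAt ℝ (deriv ψ) z := (hψ'S.contDiffAt hmem).differentiableAt (by simp)
  -- derivative of F = 2 w ψ' - w' ψ - 4 α ψ
  have H : HasDerivAt (fun x => 2 * w x * deriv ψ x - deriv w x * ψ x - 4 * α * ψ x)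
      ((2 * deriv w z * deriv ψ z + 2 * w z * deriv (deriv ψ) z)
        - (deriv (deriv w) z * ψ z + deriv w z * deriv ψ z)
        - 4 * α * deriv ψ z) z := by
    have h1 : HasDerivAt (fun x => 2 * w x * deriv ψ x)
        (2 * deriv w z * deriv ψ z + 2 * w z * deriv (deriv ψ) z) z := by
      have := ((hdw.hasDerivAt.const_mul 2).mul hdψ'.hasDerivAt)
      exact this
    have h2 : HasDerivAt (fun x => deriv w x * ψ x)
        (deriv (deriv w) z * ψ z + deriv w z * deriv ψ z) z :=
      hdw'.hasDerivAt.mul hdψ.hasDerivAt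
    have h3 : HasDerivAt (fun x => 4 * α * ψ x) (4 * α * deriv ψ z) z :=
      hdψ.hasDerivAt.const_mul (4 * α)
    exact (h1.sub h2).sub h3
  have heq : (fun x => 2 * w x * deriv ψ x - deriv w x * ψ x - 4 * α * ψ x)
      =ᶠ[nhds z] (fun _ => (0 : ℝ)) := by
    filter_upwards [hmem] with x hx using hL1 x hx
  have E1 : (2 * deriv w z * deriv ψ z + 2 * w z * deriv (deriv ψ) z)
        - (deriv (deriv w) z * ψ z + deriv w z * deriv ψ z)
        - 4 * α * deriv ψ z = 0 := by
    rw [← H.deriv, heq.deriv_eq]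
    simp
  have E2 := hL1 z hz
  have E3 := hw_P34 z hz
  have hwne := hw_ne z hz
  have key : 4 * (w z) ^ 2 * (deriv (deriv ψ) z + (w z - 2 * z) * ψ z) = 0 := by
    linear_combination (2 * w z) * E1 - (deriv w z - 4 * α) * E2 + ψ z * E3
  have h4 : (4 : ℝ) * (w z) ^ 2 ≠ 0 := by positivity
  exact (mul_eq_zero.mp key).resolve_left h4
end

section
/- Let w and ψ be smooth functions on an open interval I ⊆ ℝ, both nowhere vanishing on I, such that ψ satisfies both (L1): 2w·ψ' − w'·ψ − 4α·ψ = 0 and (L2): ψ'' + (w − 2z)·ψ = 0. Then w is a solution of P_XXXIV[α] on I. -/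
/-- If `w` and `ψ` are smooth and nowhere vanishing on an open interval `I`, and `ψ`
satisfies both linear equations (L1) and (L2), then `w` solves P_XXXIV[α] on `I`
(compatibility of the linear system). -/
theorem L1_L2_implies_P34
    (I : Set ℝ) (hIopen : IsOpen I) (hIconn : I.OrdConnected)
    (α : ℝ) (w ψ : ℝ → ℝ)
    (hw_smooth : ContDiffOn ℝ (⊤ : ℕ∞) w I)
    (hw_ne : ∀ z ∈ I, w z ≠ 0)
    (hψ_smooth : ContDiffOn ℝ (⊤ : ℕ∞) ψ I)
    (hψ_ne : ∀ z ∈ I, ψ z ≠ 0)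
    (hL1 : ∀ z ∈ I, 2 * w z * deriv ψ z - deriv w z * ψ z - 4 * α * ψ z = 0)
    (hL2 : ∀ z ∈ I, deriv (deriv ψ) z + (w z - 2 * z) * ψ z = 0) :
    ∀ z ∈ I,
      2 * w z * deriv (deriv w) z - (deriv w z) ^ 2 + 4 * (w z) ^ 3
        - 8 * z * (w z) ^ 2 + 16 * α ^ 2 = 0 := by
  intro z hz
  have hmem : I ∈ nhds z := hIopen.mem_nhds hz
  have hw' : ContDiffOn ℝ (⊤ : ℕ∞) (deriv w) I := hw_smooth.deriv_of_isOpen hIopen (by simp)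
  have hψ' : ContDiffOn ℝ (⊤ : ℕ∞) (deriv ψ) I := hψ_smooth.deriv_of_isOpen hIopen (by simp)
  have hwd : HasDerivAt w (deriv w z) z :=
    ((hw_smooth.contDiffAt hmem).differentiableAt (by simp)).hasDerivAt
  have hψd : HasDerivAt ψ (deriv ψ z) z :=
    ((hψ_smooth.contDiffAt hmem).differentiableAt (by simp)).hasDerivAt
  have hwdd : HasDerivAt (deriv w) (deriv (deriv w) z) z :=
    ((hw'.contDiffAt hmem).differentiableAt (by simp)).hasDerivAt
  have hψdd : HasDerivAt (deriv ψ) (deriv (deriv ψ) z) z :=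
    ((hψ'.contDiffAt hmem).differentiableAt (by simp)).hasDerivAt
  -- derivative of the L1 expression
  have hF : HasDerivAt (fun x => 2 * w x * deriv ψ x - deriv w x * ψ x - 4 * α * ψ x)
      ((2 * deriv w z) * deriv ψ z + (2 * w z) * deriv (deriv ψ) z
        - (deriv (deriv w) z * ψ z + deriv w z * deriv ψ z)
        - 4 * α * deriv ψ z) z := by
    have h1 : HasDerivAt (fun x => 2 * w x * deriv ψ x)
        ((2 * deriv w z) * deriv ψ z + (2 * w z) * deriv (deriv ψ) z) z :=
      ((hwd.const_mul 2).mul hψdd)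
    have h2 : HasDerivAt (fun x => deriv w x * ψ x)
        (deriv (deriv w) z * ψ z + deriv w z * deriv ψ z) z := hwdd.mul hψd
    have h3 : HasDerivAt (fun x => 4 * α * ψ x) (4 * α * deriv ψ z) z :=
      hψd.const_mul (4 * α)
    exact (h1.sub h2).sub h3
  have hF0 : HasDerivAt (fun x => 2 * w x * deriv ψ x - deriv w x * ψ x - 4 * α * ψ x)
      0 z := by
    have heq : (fun x => 2 * w x * deriv ψ x - deriv w x * ψ x - 4 * α * ψ x)
        =ᶠ[nhds z] (fun _ => (0 : ℝ)) := by
      filter_upwards [hmem] with x hx using hL1 x hx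
    exact (hasDerivAt_const z (0 : ℝ)).congr_of_eventuallyEq heq
  have E1 : (2 * deriv w z) * deriv ψ z + (2 * w z) * deriv (deriv ψ) z
      - (deriv (deriv w) z * ψ z + deriv w z * deriv ψ z)
      - 4 * α * deriv ψ z = 0 := by
    rw [hF.unique hF0]
  have E2 := hL2 z hz
  have E3 := hL1 z hz
  have key : ψ z * (2 * w z * deriv (deriv w) z - (deriv w z) ^ 2 + 4 * (w z) ^ 3
      - 8 * z * (w z) ^ 2 + 16 * α ^ 2) = 0 := by
    linear_combination (-2 * w z) * E1 + (4 * (w z) ^ 2) * E2 + (deriv w z - 4 * α) * E3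
  exact (mul_eq_zero.mp key).resolve_left (hψ_ne z hz)
end

section
/- (Miura transformation) If u is a smooth solution of P_II[α] on an open interval I ⊆ ℝ, then the function w = −u' − u² + 2z is a solution of P_XXXIV[α] on I. -/
/-- Miura transformation: if `u` solves P_II[α] on an open interval `I`, then
`w = -u' - u² + 2z` solves P_XXXIV[α] on `I`. -/
theorem miura_P2_to_P34
    (I : Set ℝ) (hIopen : IsOpen I) (hIconn : I.OrdConnected)
    (α : ℝ) (u : ℝ → ℝ)
    (hu_smooth : ContDiffOn ℝ (⊤ : ℕ∞) u I)
    (hu_P2 : ∀ z ∈ I,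
      deriv (deriv u) z = 2 * (u z) ^ 3 - 4 * z * u z + 4 * (α + 1 / 2))
    (w : ℝ → ℝ)
    (hw : w = fun z => -deriv u z - (u z) ^ 2 + 2 * z) :
    ∀ z ∈ I,
      2 * w z * deriv (deriv w) z - (deriv w z) ^ 2 + 4 * (w z) ^ 3
        - 8 * z * (w z) ^ 2 + 16 * α ^ 2 = 0 := by
  have hu'_smooth : ContDiffOn ℝ (⊤ : ℕ∞) (deriv u) I :=
    hu_smooth.deriv_of_isOpen hIopen (by simp)
  have hdu : ∀ z ∈ I, DifferentiableAt ℝ u z := fun z hz =>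
    (hu_smooth.contDiffAt (hIopen.mem_nhds hz)).differentiableAt (by simp)
  have hdu' : ∀ z ∈ I, DifferentiableAt ℝ (deriv u) z := fun z hz =>
    (hu'_smooth.contDiffAt (hIopen.mem_nhds hz)).differentiableAt (by simp)
  -- first derivative of w on I
  have hw1 : ∀ z ∈ I, deriv w z = 2 * u z * w z - 4 * α := by
    intro z hz
    have h1 : HasDerivAt w (-(deriv (deriv u) z) - 2 * u z * deriv u z + 2) z := by
      rw [hw]
      have hpow : HasDerivAt (fun x => (u x) ^ 2) (2 * u z ^ 1 * deriv u z) z :=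
        ((hdu z hz).hasDerivAt).pow 2
      have hlin : HasDerivAt (fun x : ℝ => 2 * x) 2 z := by
        simpa using (hasDerivAt_id z).const_mul 2
      have := (((hdu' z hz).hasDerivAt).neg.sub hpow).add hlin
      exact this.congr_deriv (by ring)
    rw [h1.deriv, hu_P2 z hz, hw]
    ring
  -- second derivative of w on I
  intro z hz
  have hweq : deriv w =ᶠ[nhds z] fun x => 2 * u x * w x - 4 * α := by
    filter_upwards [hIopen.mem_nhds hz] with x hx using hw1 x hx
  have hdw : ∀ x ∈ I, DifferentiableAt ℝ w x := by
    intro x hx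
    rw [hw]
    exact (((hdu' x hx).neg.sub ((hdu x hx).pow 2)).add
      ((differentiable_id.const_mul 2) x))
  have h2 : HasDerivAt (fun x => 2 * u x * w x - 4 * α)
      (2 * deriv u z * w z + 2 * u z * deriv w z) z := by
    have hmul : HasDerivAt (fun x => 2 * u x * w x)
        (2 * deriv u z * w z + 2 * u z * deriv w z) z := by
      have h2u : HasDerivAt (fun x => 2 * u x) (2 * deriv u z) z :=
        ((hdu z hz).hasDerivAt).const_mul 2
      have := h2u.mul ((hdw z hz).hasDerivAt)
      exact this
    simpa using hmul.sub_const (4 * α)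
  have hw2 : deriv (deriv w) z = 2 * deriv u z * w z + 2 * u z * deriv w z := by
    rw [hweq.deriv_eq]
    exact h2.deriv
  rw [hw2, hw1 z hz, hw]
  ring
end

section
/- (Inverse Miura transformation) If w is a smooth, nowhere-vanishing solution of P_XXXIV[α] on an open interval I ⊆ ℝ, then the function u = (w' + 4α)/(2w) is a solution of P_II[α] on I. -/
/-- Inverse Miura transformation: if `w` is a nowhere-vanishing smooth solution of
P_XXXIV[α] on an open interval `I`, then `u = (w' + 4α)/(2w)` solves P_II[α] on `I`. -/
theorem miura_P34_to_P2
    (I : Set ℝ) (hIopen : IsOpen I) (hIconn : I.OrdConnected)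
    (α : ℝ) (w : ℝ → ℝ)
    (hw_smooth : ContDiffOn ℝ (⊤ : ℕ∞) w I)
    (hw_ne : ∀ z ∈ I, w z ≠ 0)
    (hw_P34 : ∀ z ∈ I,
      2 * w z * deriv (deriv w) z - (deriv w z) ^ 2 + 4 * (w z) ^ 3
        - 8 * z * (w z) ^ 2 + 16 * α ^ 2 = 0)
    (u : ℝ → ℝ)
    (hu : u = fun z => (deriv w z + 4 * α) / (2 * w z)) :
    ∀ z ∈ I,
      deriv (deriv u) z = 2 * (u z) ^ 3 - 4 * z * u z + 4 * (α + 1 / 2) := by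
  have hdw : ContDiffOn ℝ (⊤ : ℕ∞) (deriv w) I := hw_smooth.deriv_of_isOpen hIopen (by simp)
  have hwd : ∀ z ∈ I, HasDerivAt w (deriv w z) z := fun z hz =>
    (((hw_smooth.differentiableOn (by simp)).differentiableAt
      (hIopen.mem_nhds hz))).hasDerivAt
  have hdwd : ∀ z ∈ I, HasDerivAt (deriv w) (deriv (deriv w) z) z := fun z hz =>
    (((hdw.differentiableOn (by simp)).differentiableAt
      (hIopen.mem_nhds hz))).hasDerivAt
  -- first derivative of u
  have hA : ∀ z ∈ I, HasDerivAt u (2 * z - (u z) ^ 2 - w z) z := by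
    intro z hz
    have hwz := hw_ne z hz
    have h2wz : (2 : ℝ) * w z ≠ 0 := by
      simpa using hwz
    have hnum : HasDerivAt (fun z => deriv w z + 4 * α) (deriv (deriv w) z) z := by
      simpa using (hdwd z hz).add_const (4 * α)
    have hden : HasDerivAt (fun z => 2 * w z) (2 * deriv w z) z :=
      (hwd z hz).const_mul 2
    have hq := hnum.fun_div hden h2wz
    rw [hu]
    refine hq.congr_deriv ?_
    symm
    have hP := hw_P34 z hz
    have huz : (fun z => (deriv w z + 4 * α) / (2 * w z)) z
        = (deriv w z + 4 * α) / (2 * w z) := rfl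
    rw [huz]
    field_simp
    ring_nf
    nlinarith [hP]
  intro z hz
  have hderivu : Set.EqOn (deriv u) (fun z => 2 * z - (u z) ^ 2 - w z) I :=
    fun x hx => (hA x hx).deriv
  have hEv : deriv u =ᶠ[nhds z] (fun z => 2 * z - (u z) ^ 2 - w z) :=
    Filter.eventuallyEq_of_mem (hIopen.mem_nhds hz) hderivu
  have hB : HasDerivAt (fun z => 2 * z - (u z) ^ 2 - w z)
      (2 - 2 * u z * (2 * z - (u z) ^ 2 - w z) - deriv w z) z := by
    have h1 : HasDerivAt (fun z => 2 * z) (2:ℝ) z := by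
      simpa using (hasDerivAt_id z).const_mul (2:ℝ)
    have h2 : HasDerivAt (fun z => (u z) ^ 2) (2 * u z * (2 * z - (u z) ^ 2 - w z)) z := by
      have := (hA z hz).fun_pow 2
      simpa [mul_comm, mul_assoc, mul_left_comm] using this
    exact (h1.sub h2).sub (hwd z hz)
  rw [hEv.deriv_eq, hB.deriv]
  have hwz := hw_ne z hz
  have hdwz : deriv w z = 2 * u z * w z - 4 * α := by
    rw [hu]
    field_simp
    ring
  rw [hdwz]
  ring
end

section
/- (Bäcklund transformation S) Let u be a smooth solution of P_II[α] on an open interval I ⊆ ℝ such that the function u' + u² − 2z is nowhere zero on I. Then S(u) = u + 4α/(u' + u² − 2z) is a solution of P_II[−α] on I. -/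
/-- Bäcklund transformation `S` of P_II: if `u` solves P_II[α] on an open interval `I`
and `u' + u² - 2z` is nowhere zero on `I`, then `S(u) = u + 4α/(u' + u² - 2z)` solves
P_II[-α] on `I`. -/
theorem backlund_S
    (I : Set ℝ) (hIopen : IsOpen I) (hIconn : I.OrdConnected)
    (α : ℝ) (u : ℝ → ℝ)
    (hu_smooth : ContDiffOn ℝ (⊤ : ℕ∞) u I)
    (hu_P2 : ∀ z ∈ I,
      deriv (deriv u) z = 2 * (u z) ^ 3 - 4 * z * u z + 4 * (α + 1 / 2))
    (hden_ne : ∀ z ∈ I, deriv u z + (u z) ^ 2 - 2 * z ≠ 0)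
    (Su : ℝ → ℝ)
    (hSu : Su = fun z => u z + 4 * α / (deriv u z + (u z) ^ 2 - 2 * z)) :
    ∀ z ∈ I,
      deriv (deriv Su) z = 2 * (Su z) ^ 3 - 4 * z * Su z + 4 * (-α + 1 / 2) := by
  have hu1 : ContDiffOn ℝ (⊤ : ℕ∞) (deriv u) I := hu_smooth.deriv_of_isOpen hIopen (by simp)
  set v : ℝ → ℝ := deriv u with hv
  have hdu : ∀ z ∈ I, HasDerivAt u (v z) z := fun z hz =>
    ((hu_smooth.contDiffAt (hIopen.mem_nhds hz)).differentiableAt (by simp)).hasDerivAt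
  have hdv : ∀ z ∈ I, HasDerivAt v (deriv v z) z := fun z hz =>
    ((hu1.contDiffAt (hIopen.mem_nhds hz)).differentiableAt (by simp)).hasDerivAt
  -- the denominator
  have hW : ∀ z ∈ I, HasDerivAt (fun z => v z + u z ^ 2 - 2 * z)
      (deriv v z + 2 * u z * v z - 2) z := by
    intro z hz
    have h := ((hdv z hz).add ((hdu z hz).pow 2)).sub ((hasDerivAt_id z).const_mul 2)
    refine h.congr_deriv ?_
    simp
  -- the simplified first derivative of Su on I
  set g : ℝ → ℝ := fun z =>
    v z - 4 * α * (2 * u z * (v z + u z ^ 2 - 2 * z) + 4 * α) /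
      (v z + u z ^ 2 - 2 * z) ^ 2 with hg
  have hSu' : ∀ z ∈ I, HasDerivAt Su (g z) z := by
    intro z hz
    have hne := hden_ne z hz
    have h1 : HasDerivAt (fun z => u z + 4 * α / (v z + u z ^ 2 - 2 * z))
        (v z + (0 * (v z + u z ^ 2 - 2 * z) - 4 * α * (deriv v z + 2 * u z * v z - 2)) /
          (v z + u z ^ 2 - 2 * z) ^ 2) z :=
      (hdu z hz).add ((hasDerivAt_const z (4 * α)).div (hW z hz) hne)
    rw [hSu]
    convert h1 using 1
    have hp := hu_P2 z hz
    have : deriv v z = 2 * (u z) ^ 3 - 4 * z * u z + 4 * (α + 1 / 2) := by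
      rw [hv]; exact hp
    rw [hg, this]
    field_simp
    ring
  have hderivSu : ∀ z ∈ I, deriv Su z = g z := fun z hz => (hSu' z hz).deriv
  intro z hz
  have hne := hden_ne z hz
  have hne2 : (v z + u z ^ 2 - 2 * z) ^ 2 ≠ 0 := pow_ne_zero 2 hne
  -- derivative of g at z
  have hnum : HasDerivAt (fun z => 4 * α * (2 * u z * (v z + u z ^ 2 - 2 * z) + 4 * α))
      (4 * α * (2 * v z * (v z + u z ^ 2 - 2 * z) +
        2 * u z * (deriv v z + 2 * u z * v z - 2))) z := by
    have h2u : HasDerivAt (fun z => 2 * u z) (2 * v z) z := (hdu z hz).const_mul 2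
    have h := (((h2u.mul (hW z hz)).add_const (4 * α)).const_mul (4 * α))
    exact h
  have hden2 : HasDerivAt (fun z => (v z + u z ^ 2 - 2 * z) ^ 2)
      (2 * (v z + u z ^ 2 - 2 * z) * (deriv v z + 2 * u z * v z - 2)) z := by
    have h := (hW z hz).pow 2
    refine h.congr_deriv ?_
    simp
  have hgderiv : HasDerivAt g
      (deriv v z -
        (4 * α * (2 * v z * (v z + u z ^ 2 - 2 * z) +
          2 * u z * (deriv v z + 2 * u z * v z - 2)) * (v z + u z ^ 2 - 2 * z) ^ 2 -
          4 * α * (2 * u z * (v z + u z ^ 2 - 2 * z) + 4 * α) *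
            (2 * (v z + u z ^ 2 - 2 * z) * (deriv v z + 2 * u z * v z - 2))) /
          ((v z + u z ^ 2 - 2 * z) ^ 2) ^ 2) z :=
    (hdv z hz).sub (hnum.div hden2 hne2)
  have hEq : deriv Su =ᶠ[nhds z] g :=
    Filter.eventuallyEq_of_mem (hIopen.mem_nhds hz) hderivSu
  rw [hEq.deriv_eq, hgderiv.deriv]
  have hp : deriv v z = 2 * (u z) ^ 3 - 4 * z * u z + 4 * (α + 1 / 2) := by
    rw [hv]; exact hu_P2 z hz
  rw [hp, hSu]
  simp only
  field_simp
  ring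
end

section
/- (Bäcklund transformation T) Let u be a smooth solution of P_II[α] on an open interval I ⊆ ℝ such that the function u' − u² + 2z is nowhere zero on I. Then T(u) = −u + 4(α+1)/(u' − u² + 2z) is a solution of P_II[α+1] on I. -/
/-- Bäcklund transformation `T` of P_II: if `u` solves P_II[α] on an open interval `I`
and `u' - u² + 2z` is nowhere zero on `I`, then `T(u) = -u + 4(α+1)/(u' - u² + 2z)` solves
P_II[α+1] on `I`. -/
theorem backlund_T
    (I : Set ℝ) (hIopen : IsOpen I) (hIconn : I.OrdConnected)
    (α : ℝ) (u : ℝ → ℝ)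
    (hu_smooth : ContDiffOn ℝ (⊤ : ℕ∞) u I)
    (hu_P2 : ∀ z ∈ I,
      deriv (deriv u) z = 2 * (u z) ^ 3 - 4 * z * u z + 4 * (α + 1 / 2))
    (hden_ne : ∀ z ∈ I, deriv u z - (u z) ^ 2 + 2 * z ≠ 0)
    (Tu : ℝ → ℝ)
    (hTu : Tu = fun z => -u z + 4 * (α + 1) / (deriv u z - (u z) ^ 2 + 2 * z)) :
    ∀ z ∈ I,
      deriv (deriv Tu) z = 2 * (Tu z) ^ 3 - 4 * z * Tu z + 4 * ((α + 1) + 1 / 2) := by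
  have hd1 : ContDiffOn ℝ (⊤ : ℕ∞) (deriv u) I := by
    have := hu_smooth.deriv_of_isOpen hIopen (m := (⊤ : ℕ∞)) (by simp)
    exact this
  have hU : ∀ z ∈ I, HasDerivAt u (deriv u z) z := fun z hz =>
    ((hu_smooth.differentiableOn (by simp)).differentiableAt (hIopen.mem_nhds hz)).hasDerivAt
  have hP : ∀ z ∈ I, HasDerivAt (deriv u)
      (2 * (u z) ^ 3 - 4 * z * u z + 4 * (α + 1 / 2)) z := fun z hz => by
    have := ((hd1.differentiableOn (by simp)).differentiableAt (hIopen.mem_nhds hz)).hasDerivAt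
    rwa [hu_P2 z hz] at this
  set c : ℝ := 4 * (α + 1) with hc
  set g : ℝ → ℝ := fun z => -deriv u z -
      c * (2 * (u z) ^ 3 - 4 * z * u z + 4 * (α + 1 / 2) - 2 * u z * deriv u z + 2) /
        (deriv u z - (u z) ^ 2 + 2 * z) ^ 2 with hg
  -- the denominator function
  have hw : ∀ z ∈ I, HasDerivAt (fun z => deriv u z - (u z) ^ 2 + 2 * z)
      (2 * (u z) ^ 3 - 4 * z * u z + 4 * (α + 1 / 2) - 2 * u z ^ 1 * deriv u z + 2 * 1) z := by
    intro z hz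
    exact ((hP z hz).sub ((hU z hz).pow 2)).add ((hasDerivAt_id z).const_mul 2)
  -- first derivative of Tu equals g on I
  have hTu' : ∀ z ∈ I, deriv Tu z = g z := by
    intro z hz
    have h2 : HasDerivAt (fun z => c / (deriv u z - (u z) ^ 2 + 2 * z))
        ((0 * (deriv u z - (u z) ^ 2 + 2 * z) -
          c * (2 * (u z) ^ 3 - 4 * z * u z + 4 * (α + 1 / 2) - 2 * u z ^ 1 * deriv u z + 2 * 1)) /
          (deriv u z - (u z) ^ 2 + 2 * z) ^ 2) z :=
      (hasDerivAt_const z c).div (hw z hz) (hden_ne z hz)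
    have h3 : HasDerivAt Tu (-deriv u z +
        (0 * (deriv u z - (u z) ^ 2 + 2 * z) -
          c * (2 * (u z) ^ 3 - 4 * z * u z + 4 * (α + 1 / 2) - 2 * u z ^ 1 * deriv u z + 2 * 1)) /
          (deriv u z - (u z) ^ 2 + 2 * z) ^ 2) z := by
      rw [hTu]; exact (hU z hz).neg.add h2
    rw [h3.deriv, hg]
    field_simp
    ring
  intro z hz
  have heq : deriv Tu =ᶠ[nhds z] g :=
    Filter.eventuallyEq_of_mem (hIopen.mem_nhds hz) hTu'
  rw [heq.deriv_eq]
  -- derivative of g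
  have hN : HasDerivAt
      (fun z => 2 * (u z) ^ 3 - 4 * z * u z + 4 * (α + 1 / 2) - 2 * u z * deriv u z + 2)
      (2 * (3 * u z ^ 2 * deriv u z) - (4 * 1 * u z + 4 * z * deriv u z) -
        (2 * deriv u z * deriv u z +
          2 * u z * (2 * (u z) ^ 3 - 4 * z * u z + 4 * (α + 1 / 2)))) z := by
    have t1 : HasDerivAt (fun z => 2 * (u z) ^ 3) (2 * (3 * u z ^ 2 * deriv u z)) z :=
      ((hU z hz).pow 3).const_mul 2
    have t2 : HasDerivAt (fun z => 4 * z * u z) (4 * 1 * u z + 4 * z * deriv u z) z :=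
      (((hasDerivAt_id z).const_mul 4).mul (hU z hz))
    have t4 : HasDerivAt (fun z => 2 * u z * deriv u z)
        (2 * deriv u z * deriv u z +
          2 * u z * (2 * (u z) ^ 3 - 4 * z * u z + 4 * (α + 1 / 2))) z :=
      ((hU z hz).const_mul 2).mul (hP z hz)
    exact ((((t1.sub t2).add_const (4 * (α + 1 / 2))).sub t4).add_const 2)
  have hD : HasDerivAt (fun z => (deriv u z - (u z) ^ 2 + 2 * z) ^ 2)
      (2 * (deriv u z - (u z) ^ 2 + 2 * z) ^ 1 *
        (2 * (u z) ^ 3 - 4 * z * u z + 4 * (α + 1 / 2) - 2 * u z ^ 1 * deriv u z + 2 * 1)) z :=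
    (hw z hz).pow 2
  have hgz : HasDerivAt g
      (-(2 * (u z) ^ 3 - 4 * z * u z + 4 * (α + 1 / 2)) -
        (c * (2 * (3 * u z ^ 2 * deriv u z) - (4 * 1 * u z + 4 * z * deriv u z) -
          (2 * deriv u z * deriv u z +
            2 * u z * (2 * (u z) ^ 3 - 4 * z * u z + 4 * (α + 1 / 2)))) *
          (deriv u z - (u z) ^ 2 + 2 * z) ^ 2 -
         c * (2 * (u z) ^ 3 - 4 * z * u z + 4 * (α + 1 / 2) - 2 * u z * deriv u z + 2) *
          (2 * (deriv u z - (u z) ^ 2 + 2 * z) ^ 1 *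
            (2 * (u z) ^ 3 - 4 * z * u z + 4 * (α + 1 / 2) - 2 * u z ^ 1 * deriv u z + 2 * 1))) /
          ((deriv u z - (u z) ^ 2 + 2 * z) ^ 2) ^ 2) z :=
    (hP z hz).neg.sub ((hN.const_mul c).div hD (pow_ne_zero 2 (hden_ne z hz)))
  rw [hgz.deriv, hTu]
  have hden := hden_ne z hz
  field_simp
  ring
end
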